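/- arXiv:2108.12658 — 13 statements merged into one kernel-verified Lean document; each statement's English description precedes it below -/
import Mathlib

section
/- If T is an n×n stochastic matrix, then its largest singular value satisfies σ₁(T) ≤ √n, with equality if and only if T = 𝟏 e_j^⊤ for some standard basis vector e_j. -/
open Matrix BigOperators

/-- The largest singular value (operator 2-norm) of a real square matrix. -/
noncomputable def sigma1 {ι : Type*} [Fintype ι] (A : Matrix ι ι ℝ) : ℝ :=
  sSup {r : ℝ | ∃ x : ι → ℝ, ∑ i, x i ^ 2 = 1 ∧
    r = Real.sqrt (∑ i, (A.mulVec x i) ^ 2)}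

/-!
Each entry `(T x)ᵢ = ∑ⱼ Tᵢⱼ xⱼ` is a convex combination of the `xⱼ`, so Jensen gives
`(T x)ᵢ² ≤ ∑ⱼ Tᵢⱼ xⱼ²`; summing over `i`, `‖T x‖² ≤ ∑ⱼ cⱼ xⱼ²` where `cⱼ` is the `j`-th column sum.
Since all entries are at most `1`, every `cⱼ ≤ n`, whence `σ₁(T) ≤ √(maxⱼ cⱼ) ≤ √n`.
Equality forces some column sum to be `n`, i.e. a column of ones, and then the row sums leave
no room for any other nonzero entry.
-/

section sigma1

variable {ι : Type*} [Fintype ι] {T : Matrix ι ι ℝ} {C : ℝ}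

theorem sigma1_le_sqrt
    (h : ∀ x : ι → ℝ, ∑ i, x i ^ 2 = 1 → ∑ i, (T *ᵥ x) i ^ 2 ≤ C) :
    sigma1 T ≤ Real.sqrt C := by
  refine Real.sSup_le ?_ (Real.sqrt_nonneg C)
  rintro r ⟨x, hx, rfl⟩
  exact Real.sqrt_le_sqrt (h x hx)

theorem sqrt_le_sigma1 (h : ∀ x : ι → ℝ, ∑ i, x i ^ 2 = 1 → ∑ i, (T *ᵥ x) i ^ 2 ≤ C)
    {x : ι → ℝ} (hx : ∑ i, x i ^ 2 = 1) :
    Real.sqrt (∑ i, (T *ᵥ x) i ^ 2) ≤ sigma1 T := by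
  refine le_csSup ⟨Real.sqrt C, ?_⟩ ⟨x, hx, rfl⟩
  rintro r ⟨y, hy, rfl⟩
  exact Real.sqrt_le_sqrt (h y hy)

end sigma1

namespace Stochastic

variable {ι : Type*} [Fintype ι] {T : Matrix ι ι ℝ}
  (hpos : ∀ i j, 0 ≤ T i j) (hrow : ∀ i, ∑ j, T i j = 1)
include hpos hrow

theorem entry_le_one (i j : ι) : T i j ≤ 1 :=
  hrow i ▸ Finset.single_le_sum (fun k _ => hpos i k) (Finset.mem_univ j)

theorem colSum_le_card (j : ι) : ∑ i, T i j ≤ Fintype.card ι := by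
  simpa using Finset.sum_le_sum fun i (_ : i ∈ Finset.univ) => entry_le_one hpos hrow i j

theorem sq_mulVec_le (x : ι → ℝ) (i : ι) : (T *ᵥ x) i ^ 2 ≤ ∑ j, T i j * x j ^ 2 :=
  (even_two.convexOn_pow (𝕜 := ℝ)).map_sum_le (fun j _ => hpos i j) (hrow i)
    (fun _ _ => Set.mem_univ _)

theorem sum_sq_mulVec_le {C : ℝ} (hC : ∀ j, ∑ i, T i j ≤ C)
    (x : ι → ℝ) (hx : ∑ i, x i ^ 2 = 1) : ∑ i, (T *ᵥ x) i ^ 2 ≤ C :=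
  calc ∑ i, (T *ᵥ x) i ^ 2 ≤ ∑ i, ∑ j, T i j * x j ^ 2 :=
        Finset.sum_le_sum fun i _ => sq_mulVec_le hpos hrow x i
    _ = ∑ j, (∑ i, T i j) * x j ^ 2 := by
        rw [Finset.sum_comm]
        simp only [Finset.sum_mul]
    _ ≤ ∑ j, C * x j ^ 2 :=
        Finset.sum_le_sum fun j _ => mul_le_mul_of_nonneg_right (hC j) (sq_nonneg _)
    _ = C := by rw [← Finset.mul_sum, hx, mul_one]

theorem eq_of_colSum_eq_card [DecidableEq ι] {j : ι} (hj : ∑ i, T i j = Fintype.card ι) :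
    T = Matrix.of fun _ j' => if j' = j then (1 : ℝ) else 0 := by
  have hcol : ∀ i, T i j = 1 := by
    have hsum : ∑ i, T i j = ∑ _i : ι, (1 : ℝ) := by simpa using hj
    intro i
    exact (Finset.sum_eq_sum_iff_of_le fun i _ => entry_le_one hpos hrow i j).1 hsum i
      (Finset.mem_univ i)
  ext i j'
  by_cases h : j' = j
  · simp [h, hcol i]
  · have hrest : ∑ k ∈ Finset.univ.erase j, T i k = 0 := by
      have := Finset.add_sum_erase Finset.univ (T i) (Finset.mem_univ j)
      rw [hrow i, hcol i] at this
      linarith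
    simpa [h] using (Finset.sum_eq_zero_iff_of_nonneg fun k _ => hpos i k).1 hrest j'
      (Finset.mem_erase.2 ⟨h, Finset.mem_univ _⟩)

end Stochastic

/-- If `T` is an `n × n` stochastic matrix, then `σ₁(T) ≤ √n`, with equality iff
`T = 𝟏 eⱼᵀ` for some standard basis vector `eⱼ`. -/
theorem stmt0 {n : ℕ} (hn : 0 < n) (T : Matrix (Fin n) (Fin n) ℝ)
    (hpos : ∀ i j, 0 ≤ T i j) (hrow : ∀ i, ∑ j, T i j = 1) :
    sigma1 T ≤ Real.sqrt n ∧
      (sigma1 T = Real.sqrt n ↔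
        ∃ j : Fin n, T = Matrix.of fun _ j' => if j' = j then (1 : ℝ) else 0) := by
  have hcol : ∀ j, ∑ i, T i j ≤ n := by
    simpa using Stochastic.colSum_le_card hpos hrow
  have hbound := Stochastic.sum_sq_mulVec_le hpos hrow hcol
  refine ⟨sigma1_le_sqrt hbound, fun heq => ?_, ?_⟩
  · have : Nonempty (Fin n) := ⟨⟨0, hn⟩⟩
    obtain ⟨j, hj⟩ := Finite.exists_max fun j => ∑ i, T i j
    have hle := heq ▸ sigma1_le_sqrt (Stochastic.sum_sq_mulVec_le hpos hrow hj)
    have hnj := (Real.sqrt_le_sqrt_iff (Finset.sum_nonneg fun i _ => hpos i j)).1 hle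
    exact ⟨j, Stochastic.eq_of_colSum_eq_card hpos hrow (by simpa using (hcol j).antisymm hnj)⟩
  · rintro ⟨j, rfl⟩
    refine (sigma1_le_sqrt hbound).antisymm ?_
    have hunit : ∑ i, (Pi.single j 1 : Fin n → ℝ) i ^ 2 = 1 := by
      simp [Pi.single_apply]
    simpa [Matrix.mulVec, dotProduct] using sqrt_le_sigma1 hbound hunit
end

section
/- Let T₁, T₂ be n×n stochastic matrices and E = T₁ − T₂, with ε = ‖E‖_∞/2 (where ‖·‖_∞ is the maximum absolute row sum norm). Then E can be written as E = ε·Ẽ where Ẽ = T̃₁ − T̃₂ for some stochastic matrices T̃₁, T̃₂ and ε ∈ [0,1]. -/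
/-!
Row by row, a zero-sum vector `v` with `∑ |vⱼ| ≤ 2ε` splits as `v = v⁺ - v⁻` into two nonnegative
parts of equal mass `s ≤ ε`. Scaling both by `1/ε` and topping them up with the same multiple
`1 - s/ε` of any probability vector turns them into probability vectors whose difference is `v/ε`.
-/

open Matrix BigOperators

/-- The maximum absolute row sum norm `‖·‖_∞` of a matrix. -/
noncomputable def infNorm {ι : Type*} [Fintype ι] (A : Matrix ι ι ℝ) : ℝ :=
  ⨆ i, ∑ j, |A i j|

open Finset

section Rows

variable {ι : Type*} [Fintype ι]

lemma sum_abs_sub_le_two {p q : ι → ℝ} (hp : p ∈ stdSimplex ℝ ι) (hq : q ∈ stdSimplex ℝ ι) :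
    ∑ j, |p j - q j| ≤ 2 :=
  calc ∑ j, |p j - q j| ≤ ∑ j, (p j + q j) := by
        gcongr with j
        simpa [abs_of_nonneg (hp.1 j), abs_of_nonneg (hq.1 j)] using abs_sub (p j) (q j)
    _ = 2 := by rw [sum_add_distrib, hp.2, hq.2]; norm_num

lemma inv_smul_add_smul_mem_stdSimplex {u p : ι → ℝ} {ε : ℝ} (hε : 0 < ε) (hu : ∀ j, 0 ≤ u j)
    (hsum : ∑ j, u j ≤ ε) (hp : p ∈ stdSimplex ℝ ι) :
    ε⁻¹ • u + (1 - (∑ j, u j) / ε) • p ∈ stdSimplex ℝ ι := by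
  have hc : 0 ≤ 1 - (∑ j, u j) / ε := sub_nonneg.2 ((div_le_one hε).2 hsum)
  refine ⟨fun j => ?_, ?_⟩
  · simp only [Pi.add_apply, Pi.smul_apply, smul_eq_mul]
    exact add_nonneg (mul_nonneg (inv_nonneg.2 hε.le) (hu j)) (mul_nonneg hc (hp.1 j))
  · simp only [Pi.add_apply, Pi.smul_apply, smul_eq_mul, sum_add_distrib, ← mul_sum, hp.2]
    field_simp
    ring

lemma exists_eq_smul_sub_of_sum_eq_zero {v p : ι → ℝ} {ε : ℝ} (hε : 0 ≤ ε)
    (hv : ∑ j, v j = 0) (habs : ∑ j, |v j| ≤ 2 * ε) (hp : p ∈ stdSimplex ℝ ι) :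
    ∃ a ∈ stdSimplex ℝ ι, ∃ b ∈ stdSimplex ℝ ι, v = ε • (a - b) := by
  rcases hε.eq_or_lt with rfl | hε
  · have hv0 : v = 0 := funext fun j =>
      abs_nonpos_iff.1 <| (single_le_sum (fun k _ => abs_nonneg (v k)) (mem_univ j)).trans
        (by simpa using habs)
    exact ⟨p, hp, p, hp, by simp [hv0]⟩
  set u : ι → ℝ := fun j => (v j)⁺
  set w : ι → ℝ := fun j => (v j)⁻
  have hmass : ∑ j, w j = ∑ j, u j := by
    have : ∑ j, (u j - w j) = 0 := by simpa only [u, w, posPart_sub_negPart] using hv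
    rw [sum_sub_distrib] at this
    linarith
  have hu_le : ∑ j, u j ≤ ε := by
    have : ∑ j, (u j + w j) = ∑ j, |v j| := by simp only [u, w, posPart_add_negPart]
    rw [sum_add_distrib, hmass] at this
    linarith
  refine ⟨_, inv_smul_add_smul_mem_stdSimplex hε (fun j => posPart_nonneg _) hu_le hp,
    _, inv_smul_add_smul_mem_stdSimplex hε (fun j => negPart_nonneg _) (hmass ▸ hu_le) hp, ?_⟩
  rw [hmass, add_sub_add_right_eq_sub, ← smul_sub, smul_inv_smul₀ hε.ne']
  funext j
  simp [posPart_sub_negPart]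

end Rows

section InfNorm

variable {ι : Type*} [Fintype ι]

lemma infNorm_nonneg (A : Matrix ι ι ℝ) : 0 ≤ infNorm A :=
  Real.iSup_nonneg fun _ => sum_nonneg fun _ _ => abs_nonneg _

lemma sum_abs_le_infNorm (A : Matrix ι ι ℝ) (i : ι) : ∑ j, |A i j| ≤ infNorm A :=
  le_ciSup (f := fun i => ∑ j, |A i j|) (Set.finite_range _).bddAbove i

lemma infNorm_le {A : Matrix ι ι ℝ} {c : ℝ} (h : ∀ i, ∑ j, |A i j| ≤ c) (hc : 0 ≤ c) :
    infNorm A ≤ c :=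
  Real.iSup_le h hc

end InfNorm

/-- If `T₁, T₂` are stochastic and `E = T₁ - T₂`, `ε = ‖E‖_∞ / 2`, then `ε ∈ [0,1]` and
`E = ε • Ẽ` where `Ẽ = T̃₁ - T̃₂` for some stochastic matrices `T̃₁, T̃₂`. -/
theorem stmt2 {n : ℕ} (T₁ T₂ : Matrix (Fin n) (Fin n) ℝ)
    (h₁pos : ∀ i j, 0 ≤ T₁ i j) (h₁row : ∀ i, ∑ j, T₁ i j = 1)
    (h₂pos : ∀ i j, 0 ≤ T₂ i j) (h₂row : ∀ i, ∑ j, T₂ i j = 1)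
    (E : Matrix (Fin n) (Fin n) ℝ) (hE : E = T₁ - T₂)
    (ε : ℝ) (hε : ε = infNorm E / 2) :
    0 ≤ ε ∧ ε ≤ 1 ∧
      ∃ Ttil₁ Ttil₂ : Matrix (Fin n) (Fin n) ℝ,
        (∀ i j, 0 ≤ Ttil₁ i j) ∧ (∀ i, ∑ j, Ttil₁ i j = 1) ∧
        (∀ i j, 0 ≤ Ttil₂ i j) ∧ (∀ i, ∑ j, Ttil₂ i j = 1) ∧
        E = ε • (Ttil₁ - Ttil₂) := by
  subst hE hε
  have hrow₁ (i : Fin n) : T₁ i ∈ stdSimplex ℝ (Fin n) := ⟨h₁pos i, h₁row i⟩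
  have hrow₂ (i : Fin n) : T₂ i ∈ stdSimplex ℝ (Fin n) := ⟨h₂pos i, h₂row i⟩
  have hsum (i : Fin n) : ∑ j, (T₁ - T₂) i j = 0 := by
    simp [sum_sub_distrib, h₁row, h₂row]
  have habs (i : Fin n) : ∑ j, |(T₁ - T₂) i j| ≤ 2 * (infNorm (T₁ - T₂) / 2) := by
    linarith [sum_abs_le_infNorm (T₁ - T₂) i]
  have hε₀ : 0 ≤ infNorm (T₁ - T₂) / 2 := by linarith [infNorm_nonneg (T₁ - T₂)]
  choose a ha b hb hab using fun i =>
    exists_eq_smul_sub_of_sum_eq_zero hε₀ (hsum i) (habs i) (hrow₁ i)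
  refine ⟨hε₀, ?_, a, b, fun i => (ha i).1, fun i => (ha i).2, fun i => (hb i).1,
    fun i => (hb i).2, funext hab⟩
  have hle : infNorm (T₁ - T₂) ≤ 2 :=
    infNorm_le (fun i => sum_abs_sub_le_two (hrow₁ i) (hrow₂ i)) zero_le_two
  linarith
end

section
/- Let T be an n×n stochastic matrix and let σ denote the second smallest singular value of I − T. Then for any n×n stochastic matrix S that is a direct sum of at least two stochastic matrices (a completely decoupled transition matrix), ‖T − S‖_F ≥ σ. -/
/-!
The two blocks of `S` carry nonzero left fixed vectors `x₀, x₁` of `S` with disjoint supports.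
For `v` in their span, `v (I - T) = v (S - T)`, so `‖v (I - T)‖ ≤ ‖T - S‖_F ‖v‖` by
Cauchy–Schwarz. The span is two-dimensional, so it contains some `v ≠ 0` orthogonal to an
eigenvector for the smallest eigenvalue of `(I - T)(I - T)ᵀ`; then
`σ² ‖v‖² ≤ v (I - T)(I - T)ᵀ vᵀ = ‖v (I - T)‖²`.
-/

open Matrix BigOperators

/-- The second smallest singular value of a real square matrix: the singular values are
the square roots of the eigenvalues of `A * Aᴴ`; we sort them increasingly and take the
second entry. -/
noncomputable def secondSmallestSV {n : ℕ} (A : Matrix (Fin n) (Fin n) ℝ) : ℝ :=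
  ((List.ofFn fun i =>
      Real.sqrt ((Matrix.isHermitian_mul_conjTranspose_self A).eigenvalues i)).mergeSort
    (fun a b => decide (a ≤ b))).getD 1 0

theorem List.mergeSort_ofFn_comp_of_monotone {α β : Type*} [LinearOrder α] [LinearOrder β] {n : ℕ}
    (f : Fin n → α) {g : α → β} (hg : Monotone g) :
    (List.ofFn fun i => g (f i)).mergeSort (fun a b => decide (a ≤ b))
      = List.ofFn fun i => g (f (Tuple.sort f i)) := by
  refine List.Perm.eq_of_pairwise' (r := fun a b : β => a ≤ b) (List.pairwise_mergeSort' _ _)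
    (List.pairwise_ofFn.mpr fun i j hij => hg (Tuple.monotone_sort f hij.le)) ?_
  exact (List.mergeSort_perm _ _).trans
    (Equiv.Perm.ofFn_comp_perm (Tuple.sort f) (fun i => g (f i))).symm

theorem Tuple.apply_sort_one_le {α : Type*} [LinearOrder α] {n : ℕ} (f : Fin n → α)
    (hn : 1 < n) {i : Fin n} (hi : i ≠ Tuple.sort f ⟨0, by omega⟩) :
    f (Tuple.sort f ⟨1, hn⟩) ≤ f i := by
  obtain ⟨j, rfl⟩ := (Tuple.sort f).surjective i
  refine Tuple.monotone_sort f (Fin.le_def.mpr (Nat.one_le_iff_ne_zero.mpr fun hj => hi ?_))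
  rw [show j = ⟨0, by omega⟩ from Fin.ext hj]

theorem secondSmallestSV_eq_sqrt {n : ℕ} (A : Matrix (Fin n) (Fin n) ℝ) (hn : 1 < n) :
    secondSmallestSV A =
      let μ := (isHermitian_mul_conjTranspose_self A).eigenvalues
      Real.sqrt (μ (Tuple.sort μ ⟨1, hn⟩)) := by
  rw [secondSmallestSV, List.mergeSort_ofFn_comp_of_monotone _ Real.sqrt_monotone,
    List.getD_eq_getElem _ _ (by simpa using hn)]
  simp

theorem exists_mem_span_pair_ne_zero_apply_eq_zero {K V : Type*} [Field K] [AddCommGroup V]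
    [Module K V] (ℓ : V →ₗ[K] K) {x y : V} (hxy : LinearIndependent K ![x, y]) :
    ∃ v ∈ Submodule.span K {x, y}, v ≠ 0 ∧ ℓ v = 0 := by
  by_cases hx : ℓ x = 0
  · exact ⟨x, Submodule.subset_span (by simp), by simpa using hxy.ne_zero 0, hx⟩
  refine ⟨(-ℓ y) • x + ℓ x • y, Submodule.mem_span_pair.mpr ⟨_, _, rfl⟩,
    fun h => hx (LinearIndependent.pair_iff.mp hxy _ _ h).2, ?_⟩
  simp only [map_add, map_smul, smul_eq_mul]
  ring

theorem linearIndependent_pair_of_disjoint_support {K m : Type*} [Field K] {x y : m → K}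
    (hx : x ≠ 0) (hy : y ≠ 0) (hxy : ∀ i, x i = 0 ∨ y i = 0) : LinearIndependent K ![x, y] := by
  refine LinearIndependent.pair_iff.mpr fun s t h => ⟨?_, ?_⟩
  · obtain ⟨i, hi⟩ := Function.ne_iff.mp hx
    have hsx : s * x i = 0 := by simpa [(hxy i).resolve_left hi] using congrFun h i
    exact (mul_eq_zero.mp hsx).resolve_right hi
  · obtain ⟨i, hi⟩ := Function.ne_iff.mp hy
    have hty : t * y i = 0 := by simpa [(hxy i).resolve_right hi] using congrFun h i
    exact (mul_eq_zero.mp hty).resolve_right hi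

namespace Matrix.IsHermitian

variable {m : Type*} [Fintype m] [DecidableEq m] {M : Matrix m m ℝ} (hM : M.IsHermitian)

theorem dotProduct_self_eq_sum_sq (v : m → ℝ) :
    v ⬝ᵥ v = ∑ i, (v ᵥ* (hM.eigenvectorUnitary : Matrix m m ℝ)) i ^ 2 := by
  set U : Matrix m m ℝ := ↑hM.eigenvectorUnitary
  have hU : U * Uᵀ = 1 := by
    simpa [star_eq_conjTranspose] using Matrix.mem_unitaryGroup_iff.mp hM.eigenvectorUnitary.2
  calc v ⬝ᵥ v = (v ᵥ* U) ⬝ᵥ (v ᵥ* U) := by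
        rw [← dotProduct_mulVec, ← vecMul_transpose, vecMul_vecMul, hU, vecMul_one]
    _ = _ := by simp [dotProduct, sq]

theorem dotProduct_mulVec_eq_sum (v : m → ℝ) :
    v ⬝ᵥ (M *ᵥ v) =
      ∑ i, hM.eigenvalues i * (v ᵥ* (hM.eigenvectorUnitary : Matrix m m ℝ)) i ^ 2 := by
  set U : Matrix m m ℝ := ↑hM.eigenvectorUnitary
  have hspec : M = U * diagonal hM.eigenvalues * Uᵀ := by
    simpa [star_eq_conjTranspose] using hM.spectral_theorem
  conv_lhs => rw [hspec, ← mulVec_mulVec, ← mulVec_mulVec, dotProduct_mulVec, mulVec_transpose]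
  simp only [dotProduct, mulVec_diagonal]
  exact Finset.sum_congr rfl fun i _ => by ring

theorem mul_dotProduct_self_le_of_vecMul_apply_eq_zero {lam : ℝ} {i₀ : m}
    (hlam : ∀ i, i ≠ i₀ → lam ≤ hM.eigenvalues i) {v : m → ℝ}
    (hv : (v ᵥ* (hM.eigenvectorUnitary : Matrix m m ℝ)) i₀ = 0) :
    lam * (v ⬝ᵥ v) ≤ v ⬝ᵥ (M *ᵥ v) := by
  rw [hM.dotProduct_self_eq_sum_sq, hM.dotProduct_mulVec_eq_sum, Finset.mul_sum]
  refine Finset.sum_le_sum fun i _ => ?_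
  by_cases hi : i = i₀
  · simp [hi, hv]
  · exact mul_le_mul_of_nonneg_right (hlam i hi) (sq_nonneg _)

theorem exists_mem_span_pair_ne_zero_eigenvalue_sort_one_mul_le {n : ℕ}
    {M : Matrix (Fin n) (Fin n) ℝ} (hM : M.IsHermitian) (hn : 1 < n) {x y : Fin n → ℝ}
    (hxy : LinearIndependent ℝ ![x, y]) :
    ∃ v ∈ Submodule.span ℝ {x, y}, v ≠ 0 ∧
      hM.eigenvalues (Tuple.sort hM.eigenvalues ⟨1, hn⟩) * (v ⬝ᵥ v) ≤ v ⬝ᵥ (M *ᵥ v) := by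
  obtain ⟨v, hv, hv0, hℓ⟩ := exists_mem_span_pair_ne_zero_apply_eq_zero
    ((LinearMap.proj (Tuple.sort hM.eigenvalues ⟨0, by omega⟩)).comp
      (hM.eigenvectorUnitary : Matrix (Fin n) (Fin n) ℝ).vecMulLinear) hxy
  exact ⟨v, hv, hv0, hM.mul_dotProduct_self_le_of_vecMul_apply_eq_zero
    (fun i hi => Tuple.apply_sort_one_le _ hn hi) hℓ⟩

end Matrix.IsHermitian

theorem dotProduct_vecMul_self_le {m p : Type*} [Fintype m] [Fintype p] (E : Matrix m p ℝ)
    (v : m → ℝ) : (v ᵥ* E) ⬝ᵥ (v ᵥ* E) ≤ (∑ i, ∑ j, E i j ^ 2) * (v ⬝ᵥ v) := by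
  calc (v ᵥ* E) ⬝ᵥ (v ᵥ* E) = ∑ j, (∑ i, v i * E i j) ^ 2 := by simp [dotProduct, vecMul, sq]
    _ ≤ ∑ j, (∑ i, v i ^ 2) * ∑ i, E i j ^ 2 :=
        Finset.sum_le_sum fun j _ => Finset.sum_mul_sq_le_sq_mul_sq _ _ _
    _ = (∑ i, ∑ j, E i j ^ 2) * (v ⬝ᵥ v) := by
        rw [← Finset.mul_sum, Finset.sum_comm, mul_comm]
        simp [dotProduct, sq]

theorem dotProduct_mul_conjTranspose_mulVec_le_of_vecMul_eq_self {m : Type*} [Fintype m]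
    [DecidableEq m] (T : Matrix m m ℝ) {S : Matrix m m ℝ} {v : m → ℝ} (hv : v ᵥ* S = v) :
    v ⬝ᵥ (((1 - T) * (1 - T)ᴴ) *ᵥ v) ≤ (∑ i, ∑ j, (T i j - S i j) ^ 2) * (v ⬝ᵥ v) := by
  have hA : v ᵥ* (1 - T) = -(v ᵥ* (T - S)) := by
    rw [vecMul_sub, vecMul_sub, vecMul_one, hv, neg_sub]
  rw [← mulVec_mulVec, dotProduct_mulVec, conjTranspose_eq_transpose_of_trivial, mulVec_transpose,
    hA, neg_dotProduct, dotProduct_neg, neg_neg]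
  exact dotProduct_vecMul_self_le (T - S) v

theorem exists_vecMul_eq_self_supported_on_block {K m ι : Type*} [Field K] [Fintype m]
    [DecidableEq m] [DecidableEq ι] (S : Matrix m m K) (hS : ∀ i, ∑ j, S i j = 1) (c : m → ι)
    (hblock : ∀ i j, c i ≠ c j → S i j = 0) {k : ι} (hk : ∃ i, c i = k) :
    ∃ x : m → K, x ≠ 0 ∧ (∀ i, c i ≠ k → x i = 0) ∧ x ᵥ* S = x := by
  -- `diagonal e * S` keeps only the rows of block `k` and fixes the indicator `e` of that block;
  -- a left fixed vector of it is then supported on block `k` and is fixed by `S` itself.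
  set e : m → K := fun i => if c i = k then 1 else 0
  have hSe : ∀ i, c i = k → (S *ᵥ e) i = 1 := by
    intro i hi
    rw [← hS i]
    refine Finset.sum_congr rfl fun j _ => ?_
    by_cases hj : c j = k
    · simp [e, hj]
    · simp [e, hj, hblock i j (by rwa [hi, ne_comm])]
  have he : (diagonal e * S) *ᵥ e = e := by
    ext i
    rw [← mulVec_mulVec, mulVec_diagonal]
    by_cases hi : c i = k
    · simp [hSe i hi, e, hi]
    · simp [e, hi]
  obtain ⟨i₀, hi₀⟩ := hk
  have hdet : (1 - diagonal e * S).det = 0 := by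
    refine exists_mulVec_eq_zero_iff.mp
      ⟨e, fun h => ?_, by rw [sub_mulVec, one_mulVec, he, sub_self]⟩
    simpa [e, hi₀] using congrFun h i₀
  obtain ⟨x, hx0, hx⟩ := exists_vecMul_eq_zero_iff.mpr hdet
  have hxS : (x ᵥ* diagonal e) ᵥ* S = x := by
    rwa [vecMul_sub, vecMul_one, sub_eq_zero, ← vecMul_vecMul, eq_comm] at hx
  have hsupp : ∀ j, c j ≠ k → x j = 0 := by
    intro j hj
    rw [← hxS]
    refine Finset.sum_eq_zero fun i _ => ?_
    by_cases hi : c i = k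
    · exact mul_eq_zero_of_right _ (hblock i j (by rwa [hi, ne_comm]))
    · simp [vecMul_diagonal, e, hi]
  have hxe : x ᵥ* diagonal e = x := by
    ext j
    by_cases hj : c j = k <;> simp [vecMul_diagonal, e, hj, hsupp]
  exact ⟨x, hx0, hsupp, by rwa [hxe] at hxS⟩

theorem stmt6_general {n : ℕ} (T : Matrix (Fin n) (Fin n) ℝ)
    (S : Matrix (Fin n) (Fin n) ℝ)
    (hSrow : ∀ i, ∑ j, S i j = 1)
    (c : Fin n → Fin 2) (hc : Function.Surjective c)
    (hblock : ∀ i j, c i ≠ c j → S i j = 0) :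
    secondSmallestSV (1 - T) ≤ Real.sqrt (∑ i, ∑ j, (T i j - S i j) ^ 2) := by
  have hn : 2 ≤ n := by simpa using Fintype.card_le_of_surjective c hc
  obtain ⟨x₀, hx₀, hsupp₀, hfix₀⟩ :=
    exists_vecMul_eq_self_supported_on_block S hSrow c hblock (hc 0)
  obtain ⟨x₁, hx₁, hsupp₁, hfix₁⟩ :=
    exists_vecMul_eq_self_supported_on_block S hSrow c hblock (hc 1)
  have hind : LinearIndependent ℝ ![x₀, x₁] := by
    refine linearIndependent_pair_of_disjoint_support hx₀ hx₁ fun i => ?_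
    by_cases h : c i = 0
    · exact Or.inr (hsupp₁ i (by simp [h]))
    · exact Or.inl (hsupp₀ i h)
  obtain ⟨v, hv, hv0, hle⟩ := (isHermitian_mul_conjTranspose_self (1 - T)
    ).exists_mem_span_pair_ne_zero_eigenvalue_sort_one_mul_le hn hind
  obtain ⟨a, b, rfl⟩ := Submodule.mem_span_pair.mp hv
  have hfix : (a • x₀ + b • x₁) ᵥ* S = a • x₀ + b • x₁ := by
    rw [add_vecMul, smul_vecMul, smul_vecMul, hfix₀, hfix₁]
  have hpos : 0 < (a • x₀ + b • x₁) ⬝ᵥ (a • x₀ + b • x₁) := by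
    simpa using dotProduct_star_self_pos_iff.mpr hv0
  rw [secondSmallestSV_eq_sqrt _ hn]
  exact Real.sqrt_le_sqrt (le_of_mul_le_mul_right
    (hle.trans (dotProduct_mul_conjTranspose_mulVec_le_of_vecMul_eq_self T hfix)) hpos)

/-- If `T` is an `n × n` stochastic matrix and `σ` the second smallest singular value of
`I - T`, then for any completely decoupled stochastic matrix `S` (block diagonal with
respect to a surjective assignment onto at least two blocks), `‖T - S‖_F ≥ σ`. -/
theorem stmt6 {n : ℕ} (T : Matrix (Fin n) (Fin n) ℝ)
    (hTpos : ∀ i j, 0 ≤ T i j) (hTrow : ∀ i, ∑ j, T i j = 1)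
    (S : Matrix (Fin n) (Fin n) ℝ)
    (hSpos : ∀ i j, 0 ≤ S i j) (hSrow : ∀ i, ∑ j, S i j = 1)
    (c : Fin n → Fin 2) (hc : Function.Surjective c)
    (hblock : ∀ i j, c i ≠ c j → S i j = 0) :
    secondSmallestSV (1 - T) ≤ Real.sqrt (∑ i, ∑ j, (T i j - S i j) ^ 2) :=
  stmt6_general T S hSrow c hc hblock
end

section
/- For integers 1 ≤ ℓ ≤ m−1, the minimum of max{ x^⊤𝟏/√ℓ, y^⊤𝟏/√(m−ℓ) } over all nonnegative vectors x ∈ ℝ^ℓ, y ∈ ℝ^{m−ℓ} with x^⊤x + y^⊤y = 1 equals 1/√m. -/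
open BigOperators

/-!
For nonnegative vectors the sum of the entries dominates the Euclidean norm, so
`‖x‖² ≤ a · (x᷀𝟏/√a)²` and `‖y‖² ≤ b · (y᷀𝟏/√b)²`; adding gives `1 ≤ (a + b) r²` for the
maximum `r`. Equality holds for vectors supported on a single coordinate, with the mass split as
`√(a/(a+b))` and `√(b/(a+b))`.
-/

lemma sum_sq_le_mul_sq_of_sum_div_sqrt_le {ι : Type*} [Fintype ι] {x : ι → ℝ}
    (hx : ∀ i, 0 ≤ x i) {a r : ℝ} (ha : 0 < a) (h : (∑ i, x i) / Real.sqrt a ≤ r) :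
    ∑ i, x i ^ 2 ≤ a * r ^ 2 := by
  have hsum : 0 ≤ ∑ i, x i := Finset.sum_nonneg fun i _ => hx i
  calc ∑ i, x i ^ 2 ≤ (∑ i, x i) ^ 2 := Finset.sum_sq_le_sq_sum_of_nonneg fun i _ => hx i
    _ = a * ((∑ i, x i) / Real.sqrt a) ^ 2 := by
      rw [div_pow, Real.sq_sqrt ha.le, mul_div_cancel₀ _ ha.ne']
    _ ≤ a * r ^ 2 := by gcongr

lemma one_div_sqrt_le_of_one_le_mul_sq {a r : ℝ} (ha : 0 < a) (hr : 0 ≤ r) (h : 1 ≤ a * r ^ 2) :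
    1 / Real.sqrt a ≤ r := by
  rw [div_le_iff₀ (Real.sqrt_pos.2 ha), ← Real.sqrt_sq hr, ← Real.sqrt_mul' _ ha.le]
  exact Real.one_le_sqrt.2 (by linarith)

lemma sqrt_div_div_sqrt_self {a c : ℝ} (ha : 0 < a) :
    Real.sqrt (a / c) / Real.sqrt a = 1 / Real.sqrt c := by
  rw [Real.sqrt_div ha.le]
  field_simp

lemma sum_pi_single_sq {ι : Type*} [Fintype ι] [DecidableEq ι] (i : ι) (c : ℝ) :
    ∑ j, Pi.single i c j ^ 2 = c ^ 2 := by
  simp [Pi.single_apply, ite_pow]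

theorem isLeast_max_sum_div_sqrt {ι κ : Type*} [Fintype ι] [Fintype κ] [Nonempty ι]
    [Nonempty κ] {a b : ℝ} (ha : 0 < a) (hb : 0 < b) :
    IsLeast
      {r : ℝ | ∃ x : ι → ℝ, ∃ y : κ → ℝ,
        (∀ i, 0 ≤ x i) ∧ (∀ i, 0 ≤ y i) ∧
        (∑ i, x i ^ 2) + (∑ i, y i ^ 2) = 1 ∧
        r = max ((∑ i, x i) / Real.sqrt a) ((∑ i, y i) / Real.sqrt b)}
      (1 / Real.sqrt (a + b)) := by
  classical
  constructor
  · obtain ⟨i⟩ := ‹Nonempty ι›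
    obtain ⟨j⟩ := ‹Nonempty κ›
    refine ⟨Pi.single i (Real.sqrt (a / (a + b))), Pi.single j (Real.sqrt (b / (a + b))),
      ?_, ?_, ?_, ?_⟩
    · exact (Pi.single_nonneg.2 (Real.sqrt_nonneg _) : (0 : ι → ℝ) ≤ _)
    · exact (Pi.single_nonneg.2 (Real.sqrt_nonneg _) : (0 : κ → ℝ) ≤ _)
    · rw [sum_pi_single_sq, sum_pi_single_sq, Real.sq_sqrt (by positivity),
        Real.sq_sqrt (by positivity)]
      field_simp
    · simp only [Finset.sum_pi_single', Finset.mem_univ, if_true]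
      rw [sqrt_div_div_sqrt_self ha, sqrt_div_div_sqrt_self hb, max_self]
  · rintro r ⟨x, y, hx, hy, hnorm, rfl⟩
    set r := max ((∑ i, x i) / Real.sqrt a) ((∑ i, y i) / Real.sqrt b)
    have hr0 : 0 ≤ r :=
      (div_nonneg (Finset.sum_nonneg fun i _ => hx i) (Real.sqrt_nonneg a)).trans
        (le_max_left _ _)
    have hxa : ∑ i, x i ^ 2 ≤ a * r ^ 2 :=
      sum_sq_le_mul_sq_of_sum_div_sqrt_le hx ha (le_max_left _ _)
    have hyb : ∑ i, y i ^ 2 ≤ b * r ^ 2 :=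
      sum_sq_le_mul_sq_of_sum_div_sqrt_le hy hb (le_max_right _ _)
    exact one_div_sqrt_le_of_one_le_mul_sq (by positivity) hr0 (by linarith)

/-- For `1 ≤ ℓ ≤ m - 1`, the minimum of `max { x᷀𝟏/√ℓ, y᷀𝟏/√(m-ℓ) }` over nonnegative
`x ∈ ℝ^ℓ`, `y ∈ ℝ^{m-ℓ}` with `x᷀x + y᷀y = 1` equals `1/√m`. -/
theorem stmt7 {l m : ℕ} (hl : 1 ≤ l) (hlm : l + 1 ≤ m) :
    IsLeast
      {r : ℝ | ∃ x : Fin l → ℝ, ∃ y : Fin (m - l) → ℝ,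
        (∀ i, 0 ≤ x i) ∧ (∀ i, 0 ≤ y i) ∧
        (∑ i, x i ^ 2) + (∑ i, y i ^ 2) = 1 ∧
        r = max ((∑ i, x i) / Real.sqrt l) ((∑ i, y i) / Real.sqrt (m - l))}
      (1 / Real.sqrt m) := by
  have : Nonempty (Fin l) := ⟨⟨0, hl⟩⟩
  have : Nonempty (Fin (m - l)) := ⟨⟨0, by omega⟩⟩
  have hml : (l : ℝ) < m := by exact_mod_cast hlm
  simpa using isLeast_max_sum_div_sqrt (ι := Fin l) (κ := Fin (m - l))
    (a := l) (b := m - l) (by exact_mod_cast hl) (sub_pos.2 hml)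
end

section
/- Let T be an n×n stochastic matrix with 1 a simple eigenvalue, and let u, v be left and right singular vectors of I − T corresponding to a singular value σ > 0, with u^⊤ = [u₁^⊤ | −u₂^⊤ | 0^⊤] where u₁ ∈ ℝ^ℓ and u₂ ∈ ℝ^{m−ℓ} are positive vectors. Partition T conformally with blocks T₁₁ (size ℓ×ℓ) and T₂₂ (size (m−ℓ)×(m−ℓ)). Then max{ (u₁^⊤T₁₁𝟏)/(u₁^⊤𝟏), (u₂^⊤T₂₂𝟏)/(u₂^⊤𝟏) } ≥ 1 − σ√m ≥ 1 − σ√n. -/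
/-!
Write `P`, `Q` for the supports of the positive and negative parts of `u`. Summing
`uᵀ(1 - T) = σ vᵀ` over `P`, and its negative over `Q`, the contributions of rows outside the block
have a favourable sign because `T ≥ 0`, so they can be dropped. With `M` the larger of the two block
ratios this gives `(1 - M) ‖u‖₁ ≤ σ (∑_P v - ∑_Q v) ≤ σ √#(P ∪ Q)` by Cauchy–Schwarz, and
`‖u‖₁ ≥ ‖u‖₂ = 1` turns this into `1 - M ≤ σ √#(P ∪ Q)` whenever `M < 1`.
-/

open Matrix Finset

theorem one_sub_le_max_div {a b x y c : ℝ} (ha : 0 < a) (hb : 0 < b) (hab : 1 ≤ a + b)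
    (hc : 0 ≤ c) (h : a - x + (b - y) ≤ c) : 1 - c ≤ max (x / a) (y / b) := by
  set M := max (x / a) (y / b)
  have hx : x ≤ M * a := (div_le_iff₀ ha).mp (le_max_left _ _)
  have hy : y ≤ M * b := (div_le_iff₀ hb).mp (le_max_right _ _)
  rcases le_total 1 M with hM | hM
  · linarith
  · nlinarith

theorem sum_sub_sum_le_sum_abs_union {ι : Type*} [DecidableEq ι] {P Q : Finset ι}
    (hPQ : Disjoint P Q) (v : ι → ℝ) : ∑ i ∈ P, v i - ∑ i ∈ Q, v i ≤ ∑ i ∈ P ∪ Q, |v i| := by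
  rw [sum_union hPQ, sub_eq_add_neg, ← sum_neg_distrib]
  gcongr with i
  exacts [le_abs_self _, neg_le_abs _]

section

variable {ι : Type*} [Fintype ι]

theorem sum_abs_le_sqrt_card_mul_sum_sq (s : Finset ι) (v : ι → ℝ) :
    ∑ i ∈ s, |v i| ≤ √(#s * ∑ i, v i ^ 2) := by
  refine (le_abs_self _).trans (Real.abs_le_sqrt ?_)
  calc (∑ i ∈ s, |v i|) ^ 2 ≤ #s * ∑ i ∈ s, |v i| ^ 2 := sq_sum_le_card_mul_sum_sq
    _ ≤ #s * ∑ i, v i ^ 2 := by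
      simp_rw [sq_abs]
      gcongr
      exact subset_univ s

theorem one_le_sum_abs_of_sum_sq_eq_one {u : ι → ℝ} (hu : ∑ i, u i ^ 2 = 1) :
    1 ≤ ∑ i, |u i| := by
  have h : ∑ i, |u i| ^ 2 ≤ (∑ i, |u i|) ^ 2 :=
    sum_sq_le_sq_sum_of_nonneg fun i _ => abs_nonneg (u i)
  simp_rw [sq_abs, hu] at h
  nlinarith [sum_nonneg fun i (_ : i ∈ univ) => abs_nonneg (u i)]

theorem sum_sub_sum_sum_mul_le_sum_vecMul_one_sub [DecidableEq ι] (T : Matrix ι ι ℝ)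
    (hT : ∀ i j, 0 ≤ T i j) (u : ι → ℝ) (P : Finset ι) (hu : ∀ i ∉ P, u i ≤ 0) :
    ∑ i ∈ P, u i - ∑ i ∈ P, ∑ j ∈ P, u i * T i j ≤ ∑ j ∈ P, vecMul u (1 - T) j := by
  have hout : ∑ i ∈ Pᶜ, ∑ j ∈ P, u i * T i j ≤ 0 :=
    sum_nonpos fun i hi => sum_nonpos fun j _ =>
      mul_nonpos_of_nonpos_of_nonneg (hu i (mem_compl.mp hi)) (hT i j)
  have hvecMul : ∑ j ∈ P, vecMul u (1 - T) j
      = ∑ i ∈ P, u i - (∑ i ∈ P, ∑ j ∈ P, u i * T i j + ∑ i ∈ Pᶜ, ∑ j ∈ P, u i * T i j) := by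
    rw [vecMul_sub, vecMul_one, sum_add_sum_compl, sum_comm]
    simp only [Pi.sub_apply, sum_sub_distrib, vecMul, dotProduct]
  linarith
theorem sum_abs_eq_sum_add_sum_neg_of_signed_support [DecidableEq ι] {u : ι → ℝ}
    {P Q : Finset ι} (hPQ : Disjoint P Q) (huP : ∀ i ∈ P, 0 < u i) (huQ : ∀ i ∈ Q, u i < 0)
    (hu0 : ∀ i ∉ P ∪ Q, u i = 0) :
    ∑ i, |u i| = ∑ i ∈ P, u i + ∑ i ∈ Q, -u i := by
  rw [← sum_subset (subset_univ _) fun i _ hi => by rw [hu0 i hi, abs_zero], sum_union hPQ]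
  congr 1
  exacts [sum_congr rfl fun i hi => abs_of_pos (huP i hi),
    sum_congr rfl fun i hi => abs_of_neg (huQ i hi)]

theorem one_sub_mul_sqrt_card_le_max_div [DecidableEq ι] (T : Matrix ι ι ℝ)
    (hT : ∀ i j, 0 ≤ T i j) {σ : ℝ} (hσ : 0 ≤ σ) {u v : ι → ℝ}
    (hu : ∑ i, u i ^ 2 = 1) (hv : ∑ i, v i ^ 2 = 1) (hleft : vecMul u (1 - T) = σ • v)
    {P Q : Finset ι} (hPQ : Disjoint P Q) (hP : P.Nonempty) (hQ : Q.Nonempty)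
    (huP : ∀ i ∈ P, 0 < u i) (huQ : ∀ i ∈ Q, u i < 0) (hu0 : ∀ i ∉ P ∪ Q, u i = 0) :
    1 - σ * Real.sqrt #(P ∪ Q) ≤
      max ((∑ i ∈ P, ∑ j ∈ P, u i * T i j) / ∑ i ∈ P, u i)
        ((∑ i ∈ Q, ∑ j ∈ Q, (-u i) * T i j) / ∑ i ∈ Q, -u i) := by
  have hP_part := sum_sub_sum_sum_mul_le_sum_vecMul_one_sub T hT u P fun i hi => by
    by_cases hiQ : i ∈ Q
    · exact (huQ i hiQ).le
    · exact (hu0 i (by simp [hi, hiQ])).le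
  have hQ_part := sum_sub_sum_sum_mul_le_sum_vecMul_one_sub T hT (-u) Q fun i hi => by
    by_cases hiP : i ∈ P
    · exact neg_nonpos.mpr (huP i hiP).le
    · exact (neg_eq_zero.mpr (hu0 i (by simp [hi, hiP]))).le
  rw [hleft] at hP_part
  rw [neg_vecMul, hleft] at hQ_part
  have hsum_abs := sum_abs_eq_sum_add_sum_neg_of_signed_support hPQ huP huQ hu0
  refine one_sub_le_max_div (sum_pos huP hP) (sum_pos (fun i hi => neg_pos.mpr (huQ i hi)) hQ)
    (hsum_abs ▸ one_le_sum_abs_of_sum_sq_eq_one hu) (by positivity) ?_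
  calc _ ≤ σ * (∑ i ∈ P, v i - ∑ i ∈ Q, v i) := by
        simp only [Pi.neg_apply, Pi.smul_apply, smul_eq_mul, ← mul_sum, sum_neg_distrib]
          at hP_part hQ_part ⊢
        linarith
    _ ≤ σ * ∑ i ∈ P ∪ Q, |v i| := by gcongr; exact sum_sub_sum_le_sum_abs_union hPQ v
    _ ≤ σ * Real.sqrt #(P ∪ Q) := by
      gcongr
      simpa [hv] using sum_abs_le_sqrt_card_mul_sum_sq (P ∪ Q) v

end

theorem stmt8_general {n l m : ℕ} (hl : 1 ≤ l) (hlm : l < m) (hmn : m ≤ n)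
    (T : Matrix (Fin n) (Fin n) ℝ)
    (hTpos : ∀ i j, 0 ≤ T i j)
    (σ : ℝ) (hσ : 0 < σ) (u v : Fin n → ℝ)
    (hu : ∑ i, u i ^ 2 = 1) (hv : ∑ i, v i ^ 2 = 1)
    (hleft : Matrix.vecMul u (1 - T) = σ • v)
    (hu1 : ∀ i : Fin n, (i : ℕ) < l → 0 < u i)
    (hu2 : ∀ i : Fin n, l ≤ (i : ℕ) → (i : ℕ) < m → u i < 0)
    (hu0 : ∀ i : Fin n, m ≤ (i : ℕ) → u i = 0) :
    (1 - σ * Real.sqrt m ≤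
      max
        ((∑ i ∈ Finset.univ.filter (fun i : Fin n => (i : ℕ) < l),
            ∑ j ∈ Finset.univ.filter (fun j : Fin n => (j : ℕ) < l), u i * T i j) /
          (∑ i ∈ Finset.univ.filter (fun i : Fin n => (i : ℕ) < l), u i))
        ((∑ i ∈ Finset.univ.filter (fun i : Fin n => l ≤ (i : ℕ) ∧ (i : ℕ) < m),
            ∑ j ∈ Finset.univ.filter (fun j : Fin n => l ≤ (j : ℕ) ∧ (j : ℕ) < m),
              (-u i) * T i j) /
          (∑ i ∈ Finset.univ.filter (fun i : Fin n => l ≤ (i : ℕ) ∧ (i : ℕ) < m), -u i)))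
    ∧ 1 - σ * Real.sqrt n ≤ 1 - σ * Real.sqrt m := by
  set P := univ.filter fun i : Fin n => (i : ℕ) < l
  set Q := univ.filter fun i : Fin n => l ≤ (i : ℕ) ∧ (i : ℕ) < m
  have hPQ : Disjoint P Q := disjoint_filter.mpr fun i _ hP hQ => by omega
  have hcard : #(P ∪ Q) ≤ m :=
    calc #(P ∪ Q) ≤ #{i : Fin n | i < m} := card_le_card fun i => by simp [P, Q]; omega
      _ = min n m := Fin.card_filter_val_lt
      _ ≤ m := min_le_right n m
  have hmain := one_sub_mul_sqrt_card_le_max_div T hTpos hσ.le hu hv hleft hPQ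
    ⟨⟨0, by omega⟩, by simp [P]; omega⟩ ⟨⟨l, by omega⟩, by simp [Q, hlm]⟩
    (fun i hi => hu1 i (by simpa [P] using hi))
    (fun i hi => (and_imp.mpr (hu2 i)) (by simpa [Q] using hi))
    (fun i hi => hu0 i (by simp [P, Q] at hi; omega))
  refine ⟨le_trans ?_ hmain, ?_⟩ <;> gcongr

/-- Suppose `T` is an `n × n` stochastic matrix with `1` a simple eigenvalue, and `u, v`
are unit left and right singular vectors of `I - T` for a singular value `σ > 0`, with
`u = [u₁; -u₂; 0]` where `u₁ ∈ ℝ^ℓ`, `u₂ ∈ ℝ^{m-ℓ}` are positive.  Then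
`max{ u₁ᵀT₁₁𝟏/u₁ᵀ𝟏, u₂ᵀT₂₂𝟏/u₂ᵀ𝟏 } ≥ 1 - σ√m ≥ 1 - σ√n`. -/
theorem stmt8 {n l m : ℕ} (hl : 1 ≤ l) (hlm : l < m) (hmn : m ≤ n)
    (T : Matrix (Fin n) (Fin n) ℝ)
    (hTpos : ∀ i j, 0 ≤ T i j) (hTrow : ∀ i, ∑ j, T i j = 1)
    (hsimple : (Matrix.charpoly T).rootMultiplicity 1 = 1)
    (σ : ℝ) (hσ : 0 < σ) (u v : Fin n → ℝ)
    (hu : ∑ i, u i ^ 2 = 1) (hv : ∑ i, v i ^ 2 = 1)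
    (hleft : Matrix.vecMul u (1 - T) = σ • v)
    (hright : Matrix.mulVec (1 - T) v = σ • u)
    (hu1 : ∀ i : Fin n, (i : ℕ) < l → 0 < u i)
    (hu2 : ∀ i : Fin n, l ≤ (i : ℕ) → (i : ℕ) < m → u i < 0)
    (hu0 : ∀ i : Fin n, m ≤ (i : ℕ) → u i = 0) :
    (1 - σ * Real.sqrt m ≤
      max
        ((∑ i ∈ Finset.univ.filter (fun i : Fin n => (i : ℕ) < l),
            ∑ j ∈ Finset.univ.filter (fun j : Fin n => (j : ℕ) < l), u i * T i j) /
          (∑ i ∈ Finset.univ.filter (fun i : Fin n => (i : ℕ) < l), u i))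
        ((∑ i ∈ Finset.univ.filter (fun i : Fin n => l ≤ (i : ℕ) ∧ (i : ℕ) < m),
            ∑ j ∈ Finset.univ.filter (fun j : Fin n => l ≤ (j : ℕ) ∧ (j : ℕ) < m),
              (-u i) * T i j) /
          (∑ i ∈ Finset.univ.filter (fun i : Fin n => l ≤ (i : ℕ) ∧ (i : ℕ) < m), -u i)))
    ∧ 1 - σ * Real.sqrt n ≤ 1 - σ * Real.sqrt m :=
  stmt8_general hl hlm hmn T hTpos σ hσ u v hu hv hleft hu1 hu2 hu0
end

section
/- With the setup of the singular vector partition (u^⊤(I−T) = σv^⊤, u = [u₁; −u₂; 0] with u₁, u₂ positive), if x₁ is a right Perron vector of T₁₁ normalized so that u₁^⊤x₁ = 1, then the spectral radius ρ₁ of T₁₁ satisfies ρ₁ ≥ 1 − σ·(v₁^⊤x₁), where v₁ is the corresponding subvector of v. -/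
/-!
Extend `x₁` by zero to a vector `x ≥ 0`. Then `σ v₁ᵀx₁ = uᵀ(I - T)x = 1 - uᵀTx`, and
`uᵀTx ≤ ρ₁ u₁ᵀx₁ = ρ₁`: on the first block `Tx = ρ₁ x₁`, while off it `Tx ≥ 0` and `u ≤ 0`.
-/

open Matrix Function

section ExtendByZero

variable {κ ι R : Type*} [Fintype κ] [Fintype ι] [NonUnitalNonAssocSemiring R] {e : κ → ι}

theorem dotProduct_extend_zero (he : Injective e) (w : ι → R) (x : κ → R) :
    w ⬝ᵥ extend e x 0 = (w ∘ e) ⬝ᵥ x :=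
  (Fintype.sum_of_injective e he _ _
    (fun i hi => by rw [extend_apply' _ _ _ hi, Pi.zero_apply, mul_zero])
    (fun k => by rw [he.extend_apply]; rfl)).symm

theorem submatrix_mulVec_eq_mulVec_extend_zero_comp (he : Injective e) (T : Matrix ι ι R)
    (x : κ → R) : T.submatrix e e *ᵥ x = (T *ᵥ extend e x 0) ∘ e := by
  ext k
  exact (dotProduct_extend_zero he (T (e k)) x).symm

end ExtendByZero

variable {ι R : Type*} [Fintype ι] [CommRing R] [PartialOrder R] [IsOrderedRing R]

theorem dotProduct_mulVec_le_of_mulVec_eq_smul_on {T : Matrix ι ι R} (hT : ∀ i j, 0 ≤ T i j)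
    {S : Set ι} {u x : ι → R} {ρ : R} (hu : ∀ i ∉ S, u i ≤ 0) (hx : ∀ i, 0 ≤ x i)
    (hx₀ : ∀ i ∉ S, x i = 0) (hTx : ∀ i ∈ S, (T *ᵥ x) i = ρ * x i) :
    u ⬝ᵥ (T *ᵥ x) ≤ ρ * (u ⬝ᵥ x) := by
  rw [dotProduct, dotProduct, Finset.mul_sum]
  refine Finset.sum_le_sum fun i _ => ?_
  by_cases hi : i ∈ S
  · rw [hTx i hi]
    exact (mul_left_comm _ _ _).le
  · rw [hx₀ i hi, mul_zero, mul_zero]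
    exact mul_nonpos_of_nonpos_of_nonneg (hu i hi)
      (Finset.sum_nonneg fun j _ => mul_nonneg (hT i j) (hx j))

theorem one_sub_mul_dotProduct_le_of_vecMul_one_sub_eq_smul [DecidableEq ι] {κ : Type*} [Fintype κ]
    {e : κ → ι} (he : Injective e) {T : Matrix ι ι R} (hT : ∀ i j, 0 ≤ T i j)
    {σ : R} {u v : ι → R} (hleft : u ᵥ* (1 - T) = σ • v) (hu : ∀ i ∉ Set.range e, u i ≤ 0)
    {x : κ → R} (hx : ∀ k, 0 ≤ x k) {ρ : R} (hperron : T.submatrix e e *ᵥ x = ρ • x)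
    (hnorm : (u ∘ e) ⬝ᵥ x = 1) :
    1 - σ * ((v ∘ e) ⬝ᵥ x) ≤ ρ := by
  set y := extend e x 0
  have hy₀ : ∀ i ∉ Set.range e, y i = 0 := fun i hi => extend_apply' _ _ _ hi
  have hy : ∀ i, 0 ≤ y i := by
    intro i
    by_cases hi : i ∈ Set.range e
    · obtain ⟨k, rfl⟩ := hi
      simpa only [y, he.extend_apply] using hx k
    · exact (hy₀ i hi).ge
  have hTy : ∀ i ∈ Set.range e, (T *ᵥ y) i = ρ * y i := by
    rintro _ ⟨k, rfl⟩
    have := congrFun hperron k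
    rwa [submatrix_mulVec_eq_mulVec_extend_zero_comp he, Function.comp_apply, Pi.smul_apply,
      ← he.extend_apply x 0] at this
  have hσ : σ * ((v ∘ e) ⬝ᵥ x) = 1 - u ⬝ᵥ (T *ᵥ y) :=
    calc σ * ((v ∘ e) ⬝ᵥ x) = (σ • v) ⬝ᵥ y := by
          rw [dotProduct_extend_zero he, ← smul_eq_mul, ← smul_dotProduct]; rfl
      _ = u ᵥ* (1 - T) ⬝ᵥ y := by rw [hleft]
      _ = u ⬝ᵥ y - u ⬝ᵥ (T *ᵥ y) := by
          rw [← dotProduct_mulVec, sub_mulVec, one_mulVec, dotProduct_sub]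
      _ = 1 - u ⬝ᵥ (T *ᵥ y) := by rw [dotProduct_extend_zero he, hnorm]
  have hbound := dotProduct_mulVec_le_of_mulVec_eq_smul_on hT hu hy hy₀ hTy
  rw [dotProduct_extend_zero he, hnorm, mul_one] at hbound
  rw [hσ, sub_sub_cancel]
  exact hbound

theorem stmt9_general {n l m : ℕ} (hlm : l < m) (hmn : m ≤ n)
    (T : Matrix (Fin n) (Fin n) ℝ)
    (hTpos : ∀ i j, 0 ≤ T i j)
    (σ : ℝ) (u v : Fin n → ℝ)
    (hleft : Matrix.vecMul u (1 - T) = σ • v)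
    (hu2 : ∀ i : Fin n, l ≤ (i : ℕ) → (i : ℕ) < m → u i < 0)
    (hu0 : ∀ i : Fin n, m ≤ (i : ℕ) → u i = 0)
    (x₁ : Fin l → ℝ) (hx₁ : ∀ i, 0 ≤ x₁ i) (ρ₁ : ℝ)
    (hperron :
      Matrix.mulVec
        (Matrix.of fun i j : Fin l =>
          T (Fin.castLE (hlm.le.trans hmn) i) (Fin.castLE (hlm.le.trans hmn) j)) x₁
        = ρ₁ • x₁)
    (hnorm : ∑ i : Fin l, u (Fin.castLE (hlm.le.trans hmn) i) * x₁ i = 1) :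
    1 - σ * (∑ i : Fin l, v (Fin.castLE (hlm.le.trans hmn) i) * x₁ i) ≤ ρ₁ := by
  have hu : ∀ i ∉ Set.range (Fin.castLE (hlm.le.trans hmn)), u i ≤ 0 := by
    intro i hi
    have hli : l ≤ (i : ℕ) := not_lt.1 fun h => hi ⟨⟨i, h⟩, rfl⟩
    rcases lt_or_ge (i : ℕ) m with him | hmi
    · exact (hu2 i hli him).le
    · exact (hu0 i hmi).le
  exact one_sub_mul_dotProduct_le_of_vecMul_one_sub_eq_smul (Fin.castLE_injective _) hTpos
    hleft hu hx₁ hperron hnorm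

/-- With the singular vector partition setup (`uᵀ(I-T) = σvᵀ`, `u = [u₁; -u₂; 0]` with
`u₁, u₂` positive), if `x₁ ≥ 0` is a right Perron vector of the principal submatrix `T₁₁`
(for its spectral radius `ρ₁`) normalized so that `u₁ᵀx₁ = 1`, then
`ρ₁ ≥ 1 - σ (v₁ᵀ x₁)`. -/
theorem stmt9 {n l m : ℕ} (hl : 1 ≤ l) (hlm : l < m) (hmn : m ≤ n)
    (T : Matrix (Fin n) (Fin n) ℝ)
    (hTpos : ∀ i j, 0 ≤ T i j) (hTrow : ∀ i, ∑ j, T i j = 1)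
    (σ : ℝ) (hσ : 0 < σ) (u v : Fin n → ℝ)
    (hu : ∑ i, u i ^ 2 = 1) (hv : ∑ i, v i ^ 2 = 1)
    (hleft : Matrix.vecMul u (1 - T) = σ • v)
    (hright : Matrix.mulVec (1 - T) v = σ • u)
    (hu1 : ∀ i : Fin n, (i : ℕ) < l → 0 < u i)
    (hu2 : ∀ i : Fin n, l ≤ (i : ℕ) → (i : ℕ) < m → u i < 0)
    (hu0 : ∀ i : Fin n, m ≤ (i : ℕ) → u i = 0)
    (x₁ : Fin l → ℝ) (hx₁ : ∀ i, 0 ≤ x₁ i) (ρ₁ : ℝ)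
    (hperron :
      Matrix.mulVec
        (Matrix.of fun i j : Fin l =>
          T (Fin.castLE (hlm.le.trans hmn) i) (Fin.castLE (hlm.le.trans hmn) j)) x₁
        = ρ₁ • x₁)
    (hnorm : ∑ i : Fin l, u (Fin.castLE (hlm.le.trans hmn) i) * x₁ i = 1) :
    1 - σ * (∑ i : Fin l, v (Fin.castLE (hlm.le.trans hmn) i) * x₁ i) ≤ ρ₁ :=
  stmt9_general hlm hmn T hTpos σ u v hleft hu2 hu0 x₁ hx₁ ρ₁ hperron hnorm
end

section
/- Let T be an n×n stochastic matrix partitioned into m² blocks with average row sum of each diagonal block T_{kk} at least 1 − δ, δ ∈ (0,1). Then T = B + E where B is a direct sum of stochastic matrices B₁,…,B_m (obtained via the dangling node fix of each diagonal block) and ‖E‖_∞ ≤ 2·min{1, δn} and ‖E‖_F ≤ min{2δn, √(δ²n² + δm), √(δn + δm)}. -/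
open Matrix BigOperators

/-!
Let `dᵢ = 1 - ∑_{j ∈ block(i)} T i j` be the mass that row `i` sends outside its block, and `n_k`
the size of block `k`. Row `i` of `E = T - B` is `-dᵢ/n_{c i}` on its block and agrees with `T`
off it, so its absolute row sum is exactly `2 dᵢ` and its squared row sum is at most
`dᵢ²/n_{c i} + dᵢ²`. The hypothesis on block `k` says precisely `∑_{i ∈ block k} dᵢ ≤ δ n_k`.
Hence `dᵢ ≤ min 1 (δ n)`, `∑ dᵢ ≤ δ n`, `∑ dᵢ² ≤ (max dᵢ) ∑ dᵢ`, and, as `dᵢ² ≤ dᵢ`,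
`∑ dᵢ²/n_{c i} ≤ ∑_k (1/n_k) ∑_{i ∈ block k} dᵢ ≤ δ m`.
-/

open Finset

lemma Finset.sum_sq_le_mul_sum {α : Type*} {s : Finset α} {f : α → ℝ} {M : ℝ}
    (h0 : ∀ i ∈ s, 0 ≤ f i) (hM : ∀ i ∈ s, f i ≤ M) : ∑ i ∈ s, f i ^ 2 ≤ M * ∑ i ∈ s, f i := by
  rw [mul_sum]
  exact sum_le_sum fun i hi => by nlinarith [h0 i hi, hM i hi]

namespace DanglingNodeFix

variable {ι κ : Type*} [Fintype ι] [DecidableEq κ]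

def block (c : ι → κ) (k : κ) : Finset ι := univ.filter (c · = k)

def deficiency (T : Matrix ι ι ℝ) (c : ι → κ) (i : ι) : ℝ := 1 - ∑ j ∈ block c (c i), T i j

/-- The direct sum of the dangling node fixes `dnf(T_kk)` of the diagonal blocks. -/
noncomputable def blockFix (T : Matrix ι ι ℝ) (c : ι → κ) : Matrix ι ι ℝ :=
  Matrix.of fun i j =>
    if c i = c j then T i j + ((block c (c i)).card : ℝ)⁻¹ * deficiency T c i else 0

variable {T : Matrix ι ι ℝ} {c : ι → κ} {δ : ℝ}

lemma mem_block {i : ι} {k : κ} : i ∈ block c k ↔ c i = k := by simp [block]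

lemma one_le_card_block (c : ι → κ) (i : ι) : (1 : ℝ) ≤ (block c (c i)).card := by
  exact_mod_cast card_pos.mpr ⟨i, mem_block.mpr rfl⟩

lemma sum_card_block [Fintype κ] (c : ι → κ) : ∑ k, (block c k).card = Fintype.card ι :=
  (card_eq_sum_card_fiberwise fun _ _ => mem_univ _).symm

lemma sum_inv_card_mul_sq_le_sum_sq (c : ι → κ) (f : ι → ℝ) :
    ∑ i, ((block c (c i)).card : ℝ)⁻¹ * f i ^ 2 ≤ ∑ i, f i ^ 2 :=
  sum_le_sum fun i _ =>
    mul_le_of_le_one_left (sq_nonneg _) (inv_le_one_of_one_le₀ (one_le_card_block c i))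

lemma sum_block_compl_eq_deficiency [DecidableEq ι] (hTrow : ∀ i, ∑ j, T i j = 1) (i : ι) :
    ∑ j ∈ (block c (c i))ᶜ, T i j = deficiency T c i := by
  have := sum_compl_add_sum (block c (c i)) (T i)
  rw [hTrow i] at this
  rw [deficiency]
  linarith

lemma deficiency_nonneg (hTpos : ∀ i j, 0 ≤ T i j) (hTrow : ∀ i, ∑ j, T i j = 1) (i : ι) :
    0 ≤ deficiency T c i := by
  classical
  rw [← sum_block_compl_eq_deficiency hTrow i]
  exact sum_nonneg fun j _ => hTpos i j

lemma deficiency_le_one (hTpos : ∀ i j, 0 ≤ T i j) (i : ι) : deficiency T c i ≤ 1 := by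
  have : 0 ≤ ∑ j ∈ block c (c i), T i j := sum_nonneg fun j _ => hTpos i j
  rw [deficiency]
  linarith

lemma sum_block_deficiency (k : κ) :
    ∑ i ∈ block c k, deficiency T c i =
      (block c k).card - ∑ i ∈ block c k, ∑ j ∈ block c k, T i j := by
  rw [← nsmul_one, ← sum_const, ← sum_sub_distrib]
  refine sum_congr rfl fun i hi => ?_
  rw [deficiency, mem_block.mp hi]

lemma sum_block_deficiency_le {k : κ}
    (hdiag : (1 - δ) * (block c k).card ≤ ∑ i ∈ block c k, ∑ j ∈ block c k, T i j) :
    ∑ i ∈ block c k, deficiency T c i ≤ δ * (block c k).card := by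
  rw [sum_block_deficiency]
  linarith

lemma deficiency_le (hTpos : ∀ i j, 0 ≤ T i j) (hTrow : ∀ i, ∑ j, T i j = 1) (hδ : 0 ≤ δ)
    (hdiag : ∀ k, (1 - δ) * (block c k).card ≤ ∑ i ∈ block c k, ∑ j ∈ block c k, T i j)
    (i : ι) : deficiency T c i ≤ δ * Fintype.card ι :=
  calc deficiency T c i ≤ ∑ i' ∈ block c (c i), deficiency T c i' :=
        single_le_sum (fun i' _ => deficiency_nonneg hTpos hTrow i') (mem_block.mpr rfl)
    _ ≤ δ * (block c (c i)).card := sum_block_deficiency_le (hdiag (c i))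
    _ ≤ δ * Fintype.card ι := by gcongr; exact card_le_univ _

lemma sum_deficiency_le [Fintype κ]
    (hdiag : ∀ k, (1 - δ) * (block c k).card ≤ ∑ i ∈ block c k, ∑ j ∈ block c k, T i j) :
    ∑ i, deficiency T c i ≤ δ * Fintype.card ι :=
  calc ∑ i, deficiency T c i = ∑ k, ∑ i ∈ block c k, deficiency T c i :=
        (sum_fiberwise univ c _).symm
    _ ≤ ∑ k, δ * (block c k).card := sum_le_sum fun k _ => sum_block_deficiency_le (hdiag k)
    _ = δ * Fintype.card ι := by
        rw [← mul_sum, ← Nat.cast_sum, sum_card_block]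

lemma sum_inv_card_mul_deficiency_sq_le [Fintype κ] (hTpos : ∀ i j, 0 ≤ T i j)
    (hTrow : ∀ i, ∑ j, T i j = 1) (hδ : 0 ≤ δ)
    (hdiag : ∀ k, (1 - δ) * (block c k).card ≤ ∑ i ∈ block c k, ∑ j ∈ block c k, T i j) :
    ∑ i, ((block c (c i)).card : ℝ)⁻¹ * deficiency T c i ^ 2 ≤ δ * Fintype.card κ := by
  rw [← sum_fiberwise univ c, Fintype.card_eq_sum_ones, Nat.cast_sum, mul_sum]
  refine sum_le_sum fun k _ => ?_
  set p : ℝ := ((block c k).card : ℝ)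
  calc ∑ i ∈ block c k, ((block c (c i)).card : ℝ)⁻¹ * deficiency T c i ^ 2
      ≤ ∑ i ∈ block c k, p⁻¹ * deficiency T c i := by
        refine sum_le_sum fun i hi => ?_
        rw [mem_block.mp hi]
        have h0 := deficiency_nonneg (c := c) hTpos hTrow i
        have h1 := deficiency_le_one (c := c) hTpos i
        gcongr
        nlinarith
    _ = p⁻¹ * ∑ i ∈ block c k, deficiency T c i := (mul_sum _ _ _).symm
    _ ≤ p⁻¹ * (δ * p) := by gcongr; exact sum_block_deficiency_le (hdiag k)
    _ ≤ δ * ((1 : ℕ) : ℝ) := by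
        rcases eq_or_ne p 0 with hp | hp
        · simp [hp, hδ]
        · rw [mul_comm δ, inv_mul_cancel_left₀ hp, Nat.cast_one, mul_one]

lemma sub_blockFix_apply (i j : ι) :
    (T - blockFix T c) i j =
      if c j = c i then -(((block c (c i)).card : ℝ)⁻¹ * deficiency T c i) else T i j := by
  by_cases h : c j = c i
  · simp [blockFix, h]
  · simp [blockFix, h, Ne.symm h]

lemma sum_abs_sub_blockFix [DecidableEq ι] (hTpos : ∀ i j, 0 ≤ T i j)
    (hTrow : ∀ i, ∑ j, T i j = 1) (i : ι) :
    ∑ j, |(T - blockFix T c) i j| = 2 * deficiency T c i := by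
  have hp := one_le_card_block c i
  have hd := deficiency_nonneg (c := c) hTpos hTrow i
  have hoff : ∀ j ∈ (block c (c i))ᶜ, |(T - blockFix T c) i j| = T i j := fun j hj => by
    rw [sub_blockFix_apply, if_neg (mem_block.not.mp (mem_compl.mp hj)), abs_of_nonneg (hTpos i j)]
  have hon : ∀ j ∈ block c (c i), |(T - blockFix T c) i j| =
      ((block c (c i)).card : ℝ)⁻¹ * deficiency T c i := fun j hj => by
    rw [sub_blockFix_apply, if_pos (mem_block.mp hj), abs_neg, abs_of_nonneg (by positivity)]
  rw [← sum_compl_add_sum (block c (c i)), sum_congr rfl hoff, sum_congr rfl hon, sum_const,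
    nsmul_eq_mul, mul_inv_cancel_left₀ (by positivity), sum_block_compl_eq_deficiency hTrow i]
  ring

lemma sum_sq_sub_blockFix_le [DecidableEq ι] (hTpos : ∀ i j, 0 ≤ T i j)
    (hTrow : ∀ i, ∑ j, T i j = 1) (i : ι) :
    ∑ j, (T - blockFix T c) i j ^ 2 ≤
      ((block c (c i)).card : ℝ)⁻¹ * deficiency T c i ^ 2 + deficiency T c i ^ 2 := by
  have hp := one_le_card_block c i
  have hoff : ∑ j ∈ (block c (c i))ᶜ, (T - blockFix T c) i j ^ 2 ≤ deficiency T c i ^ 2 :=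
    calc ∑ j ∈ (block c (c i))ᶜ, (T - blockFix T c) i j ^ 2
        = ∑ j ∈ (block c (c i))ᶜ, T i j ^ 2 := sum_congr rfl fun j hj => by
          rw [sub_blockFix_apply, if_neg (mem_block.not.mp (mem_compl.mp hj))]
      _ ≤ (∑ j ∈ (block c (c i))ᶜ, T i j) ^ 2 := sum_sq_le_sq_sum_of_nonneg fun j _ => hTpos i j
      _ = deficiency T c i ^ 2 := by rw [sum_block_compl_eq_deficiency hTrow i]
  have hon : ∑ j ∈ block c (c i), (T - blockFix T c) i j ^ 2 =
      ((block c (c i)).card : ℝ)⁻¹ * deficiency T c i ^ 2 := by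
    rw [sum_congr rfl fun j hj => by rw [sub_blockFix_apply, if_pos (mem_block.mp hj)],
      sum_const, nsmul_eq_mul]
    field_simp
  rw [← sum_compl_add_sum (block c (c i))]
  linarith

lemma sum_sum_sq_sub_blockFix_le [DecidableEq ι] (hTpos : ∀ i j, 0 ≤ T i j)
    (hTrow : ∀ i, ∑ j, T i j = 1) :
    ∑ i, ∑ j, (T - blockFix T c) i j ^ 2 ≤
      ∑ i, ((block c (c i)).card : ℝ)⁻¹ * deficiency T c i ^ 2 + ∑ i, deficiency T c i ^ 2 :=
  (sum_le_sum fun i _ => sum_sq_sub_blockFix_le hTpos hTrow i).trans sum_add_distrib.le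

end DanglingNodeFix

open DanglingNodeFix in
theorem stmt11_general {n m : ℕ} (T : Matrix (Fin n) (Fin n) ℝ)
    (hTpos : ∀ i j, 0 ≤ T i j) (hTrow : ∀ i, ∑ j, T i j = 1)
    (δ : ℝ) (hδ0 : 0 < δ)
    (c : Fin n → Fin m)
    (hdiag : ∀ k : Fin m,
      (1 - δ) * ((Finset.univ.filter (fun i : Fin n => c i = k)).card : ℝ) ≤
        ∑ i ∈ Finset.univ.filter (fun i : Fin n => c i = k),
          ∑ j ∈ Finset.univ.filter (fun j : Fin n => c j = k), T i j)
    (B E : Matrix (Fin n) (Fin n) ℝ)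
    (hB : B = Matrix.of fun i j =>
      if c i = c j then
        T i j + ((Finset.univ.filter (fun i' : Fin n => c i' = c i)).card : ℝ)⁻¹ *
          (1 - ∑ j' ∈ Finset.univ.filter (fun j' : Fin n => c j' = c i), T i j')
      else 0)
    (hE : E = T - B) :
    infNorm E ≤ 2 * min 1 (δ * n) ∧
      Real.sqrt (∑ i, ∑ j, E i j ^ 2) ≤
        min (2 * δ * n)
          (min (Real.sqrt (δ ^ 2 * n ^ 2 + δ * m)) (Real.sqrt (δ * n + δ * m))) := by
  change B = blockFix T c at hB
  subst hB hE
  have hδ := hδ0.le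
  have hd0 := deficiency_nonneg (c := c) hTpos hTrow
  have hdn : ∀ i, deficiency T c i ≤ δ * n := by simpa using deficiency_le hTpos hTrow hδ hdiag
  have hsum : ∑ i, deficiency T c i ≤ δ * n := by simpa using sum_deficiency_le hdiag
  have hblock : ∑ i, ((block c (c i)).card : ℝ)⁻¹ * deficiency T c i ^ 2 ≤ δ * m := by
    simpa using sum_inv_card_mul_deficiency_sq_le hTpos hTrow hδ hdiag
  have hblock_le := sum_inv_card_mul_sq_le_sum_sq c (deficiency T c)
  have hsq_n : ∑ i, deficiency T c i ^ 2 ≤ δ * n * (δ * n) :=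
    (sum_sq_le_mul_sum (fun i _ => hd0 i) fun i _ => hdn i).trans (by gcongr)
  have hsq_one : ∑ i, deficiency T c i ^ 2 ≤ δ * n :=
    (sum_sq_le_mul_sum (fun i _ => hd0 i) fun i _ => deficiency_le_one hTpos i).trans
      (by rwa [one_mul])
  have hfrob := sum_sum_sq_sub_blockFix_le (c := c) hTpos hTrow
  refine ⟨Real.iSup_le (fun i => ?_) (by positivity), le_min ?_ (le_min ?_ ?_)⟩
  · rw [sum_abs_sub_blockFix hTpos hTrow i]
    gcongr
    exact le_min (deficiency_le_one hTpos i) (hdn i)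
  · rw [Real.sqrt_le_iff]
    exact ⟨by positivity, by nlinarith⟩
  · exact Real.sqrt_le_sqrt (by nlinarith)
  · exact Real.sqrt_le_sqrt (by linarith)

/-- Let `T` be stochastic, partitioned into `m²` blocks via a surjective assignment
`c : Fin n → Fin m`, with average row sum of each diagonal block at least `1 - δ`.
Then `T = B + E`, where `B` is the direct sum of the dangling node fixes of the
diagonal blocks (hence a direct sum of stochastic matrices), and
`‖E‖_∞ ≤ 2 min{1, δn}` and `‖E‖_F ≤ min{2δn, √(δ²n² + δm), √(δn + δm)}`. -/
theorem stmt11 {n m : ℕ} (T : Matrix (Fin n) (Fin n) ℝ)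
    (hTpos : ∀ i j, 0 ≤ T i j) (hTrow : ∀ i, ∑ j, T i j = 1)
    (δ : ℝ) (hδ0 : 0 < δ) (hδ1 : δ < 1)
    (c : Fin n → Fin m) (hc : Function.Surjective c)
    (hdiag : ∀ k : Fin m,
      (1 - δ) * ((Finset.univ.filter (fun i : Fin n => c i = k)).card : ℝ) ≤
        ∑ i ∈ Finset.univ.filter (fun i : Fin n => c i = k),
          ∑ j ∈ Finset.univ.filter (fun j : Fin n => c j = k), T i j)
    (B E : Matrix (Fin n) (Fin n) ℝ)
    (hB : B = Matrix.of fun i j =>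
      if c i = c j then
        T i j + ((Finset.univ.filter (fun i' : Fin n => c i' = c i)).card : ℝ)⁻¹ *
          (1 - ∑ j' ∈ Finset.univ.filter (fun j' : Fin n => c j' = c i), T i j')
      else 0)
    (hE : E = T - B) :
    infNorm E ≤ 2 * min 1 (δ * n) ∧
      Real.sqrt (∑ i, ∑ j, E i j ^ 2) ≤
        min (2 * δ * n)
          (min (Real.sqrt (δ ^ 2 * n ^ 2 + δ * m)) (Real.sqrt (δ * n + δ * m))) :=
  stmt11_general T hTpos hTrow δ hδ0 c hdiag B E hB hE
end

section
/- Let T be an n×n sub-stochastic matrix and dnf(T) = T + (1/n)(J − TJ) its dangling node fix. Then for any n×n stochastic matrix S: ‖T − dnf(T)‖_∞ ≤ ‖T − S‖_∞. -/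
/-!
Each row of `T - dnf T` is constant, and its absolute row sum is exactly the deficit
`|1 - ∑ⱼ Tᵢⱼ|` of row `i`. A matrix `S` with unit row sums must make up that deficit, so the
triangle inequality bounds it by the absolute row sum of `T - S`.
-/

open Matrix BigOperators

/-- The dangling node fix of a square matrix: `dnf(T) = T + (1/n)(J - TJ)`,
where `J` is the all-ones matrix. -/
noncomputable def dnf {ι : Type*} [Fintype ι] (A : Matrix ι ι ℝ) : Matrix ι ι ℝ :=
  A + ((Fintype.card ι : ℝ)⁻¹) •
    ((Matrix.of fun _ _ => (1 : ℝ)) - A * Matrix.of fun _ _ => (1 : ℝ))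

section

variable {ι : Type*} [Fintype ι]

theorem sub_dnf_apply (A : Matrix ι ι ℝ) (i j : ι) :
    (A - dnf A) i j = -((Fintype.card ι : ℝ)⁻¹ * (1 - ∑ k, A i k)) := by
  simp [dnf, Matrix.mul_apply]

theorem sum_abs_sub_dnf_row (A : Matrix ι ι ℝ) (i : ι) :
    ∑ j, |(A - dnf A) i j| = |1 - ∑ k, A i k| := by
  have hcard : (Fintype.card ι : ℝ) ≠ 0 := by
    have : Nonempty ι := ⟨i⟩
    positivity
  simp only [sub_dnf_apply, abs_neg, abs_mul, Finset.sum_const, Finset.card_univ, nsmul_eq_mul,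
    abs_inv, Nat.abs_cast]
  field_simp

theorem abs_one_sub_sum_row_le (A S : Matrix ι ι ℝ) (i : ι) (hS : ∑ j, S i j = 1) :
    |1 - ∑ j, A i j| ≤ ∑ j, |(A - S) i j| :=
  calc |1 - ∑ j, A i j| = |∑ j, (A - S) i j| := by
        rw [← hS, ← Finset.sum_sub_distrib, ← abs_neg, ← Finset.sum_neg_distrib]
        simp only [neg_sub, Matrix.sub_apply]
    _ ≤ ∑ j, |(A - S) i j| := Finset.abs_sum_le_sum_abs _ _

end

theorem stmt12_general {n : ℕ} (T : Matrix (Fin n) (Fin n) ℝ)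
    (S : Matrix (Fin n) (Fin n) ℝ)
    (hSrow : ∀ i, ∑ j, S i j = 1) :
    infNorm (T - dnf T) ≤ infNorm (T - S) :=
  ciSup_mono (Set.finite_range _).bddAbove fun i => by
    rw [sum_abs_sub_dnf_row]
    exact abs_one_sub_sum_row_le T S i (hSrow i)

/-- For a sub-stochastic matrix `T` and any stochastic matrix `S`,
`‖T - dnf(T)‖_∞ ≤ ‖T - S‖_∞`. -/
theorem stmt12 {n : ℕ} (hn : 0 < n) (T : Matrix (Fin n) (Fin n) ℝ)
    (hTpos : ∀ i j, 0 ≤ T i j) (hTrow : ∀ i, ∑ j, T i j ≤ 1)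
    (S : Matrix (Fin n) (Fin n) ℝ)
    (hSpos : ∀ i j, 0 ≤ S i j) (hSrow : ∀ i, ∑ j, S i j = 1) :
    infNorm (T - dnf T) ≤ infNorm (T - S) :=
  stmt12_general T S hSrow
end

section
/- Let T be an n×n sub-stochastic matrix and dnf(T) = T + (1/n)(J − TJ). Then for any n×n stochastic matrix S: ‖T − dnf(T)‖₂ ≤ ‖T − S‖₂ and ‖T − dnf(T)‖_F ≤ ‖T − S‖_F, i.e., dnf(T) is the closest stochastic matrix to T in both the operator 2-norm and the Frobenius norm. -/
open Matrix BigOperators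

/-! Write `r = T 1 - 1` for the vector of row-sum defects. The difference `T - dnf T` is the
rank-one matrix `(1/n) r 1ᵀ`, whose operator and Frobenius norms both equal `‖r‖ / √n`. For any
`S` with unit row sums, the row sums of `T - S` are again `r`, so testing `T - S` on the unit vector
`1 / √n`, respectively applying Cauchy–Schwarz to each row, bounds both of its norms below by
`‖r‖ / √n`. -/

section

variable {ι : Type*} [Fintype ι]

lemma bddAbove_sigma1_set (A : Matrix ι ι ℝ) :
    BddAbove {r : ℝ | ∃ x : ι → ℝ, ∑ i, x i ^ 2 = 1 ∧ r = √(∑ i, (A *ᵥ x) i ^ 2)} := by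
  refine ⟨√(∑ i, ∑ j, A i j ^ 2), ?_⟩
  rintro _ ⟨x, hx, rfl⟩
  refine Real.sqrt_le_sqrt (Finset.sum_le_sum fun i _ => ?_)
  simpa [mulVec, dotProduct, hx] using Finset.sum_mul_sq_le_sq_mul_sq Finset.univ (A i) x

lemma le_sigma1 (A : Matrix ι ι ℝ) {x : ι → ℝ} (hx : ∑ i, x i ^ 2 = 1) :
    √(∑ i, (A *ᵥ x) i ^ 2) ≤ sigma1 A :=
  le_csSup (bddAbove_sigma1_set A) ⟨x, hx, rfl⟩

lemma sigma1_le (A : Matrix ι ι ℝ) {c : ℝ} (hc : 0 ≤ c)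
    (h : ∀ x : ι → ℝ, ∑ i, x i ^ 2 = 1 → ∑ i, (A *ᵥ x) i ^ 2 ≤ c ^ 2) : sigma1 A ≤ c := by
  refine Real.sSup_le ?_ hc
  rintro _ ⟨x, hx, rfl⟩
  exact (Real.sqrt_le_sqrt (h x hx)).trans_eq (Real.sqrt_sq hc)

lemma sigma1_vecMulVec_one_le (u : ι → ℝ) :
    sigma1 (vecMulVec u (1 : ι → ℝ)) ≤ √(Fintype.card ι * ∑ i, u i ^ 2) := by
  refine sigma1_le _ (Real.sqrt_nonneg _) fun x hx => ?_
  rw [Real.sq_sqrt (by positivity)]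
  have hmulVec : ∀ i, (vecMulVec u (1 : ι → ℝ) *ᵥ x) i = u i * ∑ j, x j := by
    intro i
    simp [mulVec, dotProduct, vecMulVec_apply, Finset.mul_sum]
  have hsum : (∑ j, x j) ^ 2 ≤ Fintype.card ι := by
    simpa [hx] using sq_sum_le_card_mul_sum_sq (s := Finset.univ) (f := x)
  simp_rw [hmulVec, mul_pow, ← Finset.sum_mul, mul_comm (Fintype.card ι : ℝ)]
  gcongr

lemma sum_sum_vecMulVec_one_sq (u : ι → ℝ) :
    ∑ i, ∑ j, vecMulVec u (1 : ι → ℝ) i j ^ 2 = Fintype.card ι * ∑ i, u i ^ 2 := by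
  simp [vecMulVec_apply, Finset.mul_sum]

lemma sum_sq_mulVec_one_div_card_le (N : Matrix ι ι ℝ) :
    (∑ i, (N *ᵥ 1) i ^ 2) / Fintype.card ι ≤ ∑ i, ∑ j, N i j ^ 2 := by
  rw [Finset.sum_div]
  refine Finset.sum_le_sum fun i _ => div_le_of_le_mul₀ (by positivity) (by positivity) ?_
  rw [mul_comm]
  simpa [mulVec, dotProduct] using sq_sum_le_card_mul_sum_sq (s := Finset.univ) (f := N i)

lemma sqrt_sum_sq_mulVec_one_div_card_le_sigma1 (N : Matrix ι ι ℝ) :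
    √((∑ i, (N *ᵥ 1) i ^ 2) / Fintype.card ι) ≤ sigma1 N := by
  rcases isEmpty_or_nonempty ι with hι | hι
  · rw [Finset.univ_eq_empty, Finset.sum_empty, zero_div, Real.sqrt_zero]
    exact Real.sSup_nonneg (by rintro _ ⟨x, -, rfl⟩; positivity)
  have hcard : (0 : ℝ) < Fintype.card ι := by exact_mod_cast Fintype.card_pos
  convert le_sigma1 N (x := (√(Fintype.card ι))⁻¹ • 1) ?_ using 2
  · simp [mulVec_smul, mul_pow, Real.sq_sqrt hcard.le, ← Finset.mul_sum, div_eq_inv_mul]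
  · simp [Real.sq_sqrt hcard.le, hcard.ne']

lemma self_sub_dnf (A : Matrix ι ι ℝ) :
    A - dnf A = vecMulVec ((Fintype.card ι : ℝ)⁻¹ • (A *ᵥ 1 - 1)) (1 : ι → ℝ) := by
  ext i j
  simp [dnf, vecMulVec_apply, mul_apply, mulVec, dotProduct]
  ring

lemma sub_mulVec_one_of_sum_eq_one (A : Matrix ι ι ℝ) {S : Matrix ι ι ℝ}
    (hS : ∀ i, ∑ j, S i j = 1) : (A - S) *ᵥ 1 = A *ᵥ 1 - 1 := by
  ext i
  simp [mulVec, dotProduct, hS]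

lemma card_mul_sum_sq_inv_card_smul (w : ι → ℝ) :
    (Fintype.card ι : ℝ) * ∑ i, ((Fintype.card ι : ℝ)⁻¹ • w) i ^ 2 =
      (∑ i, w i ^ 2) / Fintype.card ι := by
  rcases eq_or_ne (Fintype.card ι : ℝ) 0 with h | h
  · simp [h]
  simp only [Pi.smul_apply, smul_eq_mul, mul_pow, ← Finset.mul_sum]
  field_simp

end

theorem stmt13_general {n : ℕ} (T : Matrix (Fin n) (Fin n) ℝ)
    (S : Matrix (Fin n) (Fin n) ℝ)
    (hSrow : ∀ i, ∑ j, S i j = 1) :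
    sigma1 (T - dnf T) ≤ sigma1 (T - S) ∧
      Real.sqrt (∑ i, ∑ j, (T - dnf T) i j ^ 2) ≤
        Real.sqrt (∑ i, ∑ j, (T - S) i j ^ 2) := by
  have hrow := sub_mulVec_one_of_sum_eq_one T hSrow
  rw [self_sub_dnf, sum_sum_vecMulVec_one_sq, card_mul_sum_sq_inv_card_smul]
  refine ⟨(sigma1_vecMulVec_one_le _).trans ?_, Real.sqrt_le_sqrt ?_⟩
  · rw [card_mul_sum_sq_inv_card_smul, ← hrow]
    exact sqrt_sum_sq_mulVec_one_div_card_le_sigma1 _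
  · rw [← hrow]
    exact sum_sq_mulVec_one_div_card_le _

/-- For a sub-stochastic matrix `T` and any stochastic matrix `S`,
`‖T - dnf(T)‖₂ ≤ ‖T - S‖₂` and `‖T - dnf(T)‖_F ≤ ‖T - S‖_F`: the dangling node fix
is the closest stochastic matrix to `T` in both the operator 2-norm and the
Frobenius norm. -/
theorem stmt13 {n : ℕ} (hn : 0 < n) (T : Matrix (Fin n) (Fin n) ℝ)
    (hTpos : ∀ i j, 0 ≤ T i j) (hTrow : ∀ i, ∑ j, T i j ≤ 1)
    (S : Matrix (Fin n) (Fin n) ℝ)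
    (hSpos : ∀ i j, 0 ≤ S i j) (hSrow : ∀ i, ∑ j, S i j = 1) :
    sigma1 (T - dnf T) ≤ sigma1 (T - S) ∧
      Real.sqrt (∑ i, ∑ j, (T - dnf T) i j ^ 2) ≤
        Real.sqrt (∑ i, ∑ j, (T - S) i j ^ 2) :=
  stmt13_general T S hSrow
end

section
/- Let T be an n×n sub-stochastic matrix with row sums r₁,…,r_n. Then (T − dnf(T))(T − dnf(T))^⊤ = (1/n)(𝟏 − T𝟏)(𝟏 − T𝟏)^⊤, and consequently ‖T − dnf(T)‖₂² = ‖T − dnf(T)‖_F² = (1/n)·Σᵢ(1 − rᵢ)². -/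
open Matrix BigOperators

/-! `T - dnf T = -(1/n)(J - TJ)` is the rank-one matrix `u 𝟏ᵀ` with `uᵢ = -(1 - rᵢ)/n`:
every row is constant. Hence its Gram matrix is `n u uᵀ`, its squared Frobenius norm is
`n ‖u‖²`, and its operator norm is `‖u‖ · sup_{‖x‖ = 1} |𝟏ᵀx| = √n ‖u‖` by Cauchy–Schwarz. -/

open Finset

theorem sub_dnf_eq_replicateCol {ι : Type*} [Fintype ι] (A : Matrix ι ι ℝ) :
    A - dnf A = replicateCol ι fun i => -((Fintype.card ι : ℝ)⁻¹ * (1 - ∑ k, A i k)) := by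
  ext i j
  simp [dnf, mul_apply]

section ConstantRows

variable {ι : Type*} [Fintype ι]

theorem replicateCol_mul_transpose_self (u : ι → ℝ) :
    replicateCol ι u * (replicateCol ι u)ᵀ = of fun i j => Fintype.card ι * (u i * u j) := by
  ext i j
  simp [mul_apply]

theorem sum_sum_replicateCol_sq (u : ι → ℝ) :
    ∑ i, ∑ j, replicateCol ι u i j ^ 2 = Fintype.card ι * ∑ i, u i ^ 2 := by
  simp [mul_sum]

theorem sum_replicateCol_mulVec_sq (u x : ι → ℝ) :
    ∑ i, (replicateCol ι u *ᵥ x) i ^ 2 = (∑ j, x j) ^ 2 * ∑ i, u i ^ 2 := by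
  simp only [mulVec, dotProduct, replicateCol_apply, ← mul_sum, mul_pow, ← sum_mul]
  ring

/-- Cauchy–Schwarz bounds `(∑ x)²` by `card ι` on the unit sphere, with equality at the
normalized all-ones vector. -/
theorem sigma1_replicateCol (u : ι → ℝ) :
    sigma1 (replicateCol ι u) = √(Fintype.card ι * ∑ i, u i ^ 2) := by
  rcases isEmpty_or_nonempty ι with hι | hι
  · simp [sigma1]
  have hcard : (0 : ℝ) < Fintype.card ι := Nat.cast_pos.mpr Fintype.card_pos
  refine IsGreatest.csSup_eq ⟨⟨fun _ => (√(Fintype.card ι))⁻¹, ?_, ?_⟩, ?_⟩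
  · simp [inv_pow, Real.sq_sqrt hcard.le, hcard.ne']
  · rw [sum_replicateCol_mulVec_sq]
    congr 2
    simp only [sum_const, card_univ, nsmul_eq_mul, mul_pow, inv_pow, Real.sq_sqrt hcard.le]
    field_simp
  · rintro r ⟨x, hx, rfl⟩
    rw [sum_replicateCol_mulVec_sq]
    gcongr
    simpa [hx] using sq_sum_le_card_mul_sum_sq (s := univ) (f := x)

end ConstantRows

theorem stmt14_general {n : ℕ} (T : Matrix (Fin n) (Fin n) ℝ) :
    (T - dnf T) * (T - dnf T)ᵀ =
      Matrix.of (fun i j => (n : ℝ)⁻¹ * ((1 - ∑ k, T i k) * (1 - ∑ k, T j k))) ∧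
    sigma1 (T - dnf T) ^ 2 = (n : ℝ)⁻¹ * ∑ i, (1 - ∑ k, T i k) ^ 2 ∧
    (∑ i, ∑ j, (T - dnf T) i j ^ 2) = (n : ℝ)⁻¹ * ∑ i, (1 - ∑ k, T i k) ^ 2 := by
  set d : Fin n → ℝ := fun i => 1 - ∑ k, T i k
  -- valid also for `n = 0`, where `0⁻¹ = 0`
  have hinv : (n : ℝ) * (n : ℝ)⁻¹ * (n : ℝ)⁻¹ = (n : ℝ)⁻¹ := by
    simpa only [inv_inv] using inv_mul_mul_self (n : ℝ)⁻¹
  have hsq : (n : ℝ) * ∑ i, (-((n : ℝ)⁻¹ * d i)) ^ 2 = (n : ℝ)⁻¹ * ∑ i, d i ^ 2 := by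
    simp only [neg_sq, mul_pow, ← mul_sum]
    linear_combination (∑ i, d i ^ 2) * hinv
  rw [sub_dnf_eq_replicateCol, replicateCol_mul_transpose_self, sigma1_replicateCol,
    Real.sq_sqrt (by positivity), sum_sum_replicateCol_sq, Fintype.card_fin]
  refine ⟨?_, hsq, hsq⟩
  ext i j
  simp only [of_apply]
  linear_combination d i * d j * hinv

/-- For a sub-stochastic matrix `T` with row sums `rᵢ`,
`(T - dnf T)(T - dnf T)ᵀ = (1/n)(𝟏 - T𝟏)(𝟏 - T𝟏)ᵀ`, and consequently
`‖T - dnf T‖₂² = ‖T - dnf T‖_F² = (1/n) ∑ᵢ (1 - rᵢ)²`. -/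
theorem stmt14 {n : ℕ} (hn : 0 < n) (T : Matrix (Fin n) (Fin n) ℝ)
    (hTpos : ∀ i j, 0 ≤ T i j) (hTrow : ∀ i, ∑ j, T i j ≤ 1) :
    (T - dnf T) * (T - dnf T)ᵀ =
      Matrix.of (fun i j => (n : ℝ)⁻¹ * ((1 - ∑ k, T i k) * (1 - ∑ k, T j k))) ∧
    sigma1 (T - dnf T) ^ 2 = (n : ℝ)⁻¹ * ∑ i, (1 - ∑ k, T i k) ^ 2 ∧
    (∑ i, ∑ j, (T - dnf T) i j ^ 2) = (n : ℝ)⁻¹ * ∑ i, (1 - ∑ k, T i k) ^ 2 :=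
  stmt14_general T
end

section
/- Let T₀ and T be n×n stochastic matrices, S a subset of indices such that the principal submatrix T₀[S] is also stochastic, and let T̃ = dnf(T[S]). Then ‖T̃ − T₀[S]‖₂ ≤ ‖T − T₀‖₂. -/
open Matrix BigOperators

/-! With `E = T - T₀` and the centering matrix `C = I - J/|S|`, stochasticity of `T₀[S]`
gives `T₀[S] J = J` and hence `dnf(T[S]) - T₀[S] = E[S] C`. The spectral norm is
submultiplicative, `E[S] = Pᴴ E P` for a selection matrix `P` with `Pᴴ P = I`, so
`‖E[S]‖ ≤ ‖E‖`, and `C` is an orthogonal projection, so `‖C‖ ≤ 1`. -/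

open scoped Matrix.Norms.L2Operator

namespace Matrix

variable {𝕜 : Type*} [RCLike 𝕜] {l m n : Type*} [Fintype l] [Fintype m] [Fintype n]

lemma ones_mul_ones {α : Type*} [NonAssocSemiring α] :
    ((of fun _ _ => 1 : Matrix n n α) * of fun _ _ => 1) =
      (Fintype.card n : α) • of fun _ _ => 1 := by
  ext i j
  simp [mul_apply]

variable [DecidableEq l] [DecidableEq m] [DecidableEq n]

lemma l2_opNorm_one_submatrix_id_le {e : l → n} (he : Function.Injective e) :
    ‖(1 : Matrix n n 𝕜).submatrix id e‖ ≤ 1 := by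
  set P := (1 : Matrix n n 𝕜).submatrix id e
  have hP : Pᴴ * P = 1 := by
    rw [conjTranspose_submatrix, conjTranspose_one,
      ← submatrix_mul _ _ _ _ _ Function.bijective_id, mul_one, submatrix_one _ he]
  have hone : ‖(1 : Matrix l l 𝕜)‖ ≤ 1 := by
    rw [← l2_opNorm_toEuclideanCLM, map_one]
    exact ContinuousLinearMap.norm_id_le
  have hPP : ‖P‖ * ‖P‖ ≤ 1 := by
    rw [← l2_opNorm_conjTranspose_mul_self, hP]
    exact hone
  nlinarith [norm_nonneg P]

lemma l2_opNorm_submatrix_le (A : Matrix m n 𝕜) {f : l → m} {g : l → n}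
    (hf : Function.Injective f) (hg : Function.Injective g) :
    ‖A.submatrix f g‖ ≤ ‖A‖ := by
  have hA : A.submatrix f g =
      ((1 : Matrix m m 𝕜).submatrix id f)ᴴ * A * (1 : Matrix n n 𝕜).submatrix id g := by
    rw [conjTranspose_submatrix, conjTranspose_one]
    conv_rhs => rw [← A.submatrix_id_id]
    rw [← submatrix_mul _ _ _ _ _ Function.bijective_id,
      ← submatrix_mul _ _ _ _ _ Function.bijective_id, Matrix.one_mul, Matrix.mul_one]
  calc ‖A.submatrix f g‖
      ≤ ‖((1 : Matrix m m 𝕜).submatrix id f)ᴴ‖ * ‖A‖ * ‖(1 : Matrix n n 𝕜).submatrix id g‖ := by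
        rw [hA]
        refine (l2_opNorm_mul _ _).trans ?_
        gcongr
        exact l2_opNorm_mul _ _
    _ ≤ 1 * ‖A‖ * 1 := by
        rw [l2_opNorm_conjTranspose]
        gcongr
        exacts [l2_opNorm_one_submatrix_id_le hf, l2_opNorm_one_submatrix_id_le hg]
    _ = ‖A‖ := by ring

variable (𝕜 n) in
noncomputable def centering : Matrix n n 𝕜 :=
  1 - (Fintype.card n : 𝕜)⁻¹ • of fun _ _ => 1

lemma isStarProjection_centering : IsStarProjection (centering 𝕜 n) where
  isIdempotentElem := by
    have hs : ((Fintype.card n : 𝕜)⁻¹ * (Fintype.card n : 𝕜)⁻¹ * Fintype.card n) =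
        (Fintype.card n : 𝕜)⁻¹ := by
      rw [mul_right_comm]
      simpa using mul_inv_mul_cancel (Fintype.card n : 𝕜)⁻¹
    rw [IsIdempotentElem, centering, sub_mul, mul_sub, mul_sub, smul_mul_smul_comm, ones_mul_ones,
      smul_smul, hs]
    simp only [Matrix.one_mul, Matrix.mul_one, Matrix.mul_smul]
    abel
  isSelfAdjoint := by
    rw [IsSelfAdjoint, centering, star_sub, star_one, star_smul]
    congr 1
    ext i j
    simp

end Matrix

lemma dnf_sub_eq_sub_mul_centering {ι : Type*} [Fintype ι] [DecidableEq ι]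
    (A B : Matrix ι ι ℝ) (hB : ∀ i, ∑ j, B i j = 1) :
    dnf A - B = (A - B) * centering ℝ ι := by
  have hBJ : (B * of fun _ _ => 1) = of fun _ _ => 1 := by
    ext i j
    simp [mul_apply, hB]
  rw [dnf, centering, Matrix.mul_sub, Matrix.mul_one, Matrix.mul_smul, Matrix.sub_mul, hBJ]
  module

lemma sigma1_eq_l2_opNorm {ι : Type*} [Fintype ι] [DecidableEq ι] (A : Matrix ι ι ℝ) :
    sigma1 A = ‖A‖ := by
  rw [← l2_opNorm_toEuclideanCLM, ← ContinuousLinearMap.sSup_sphere_eq_norm,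
    EuclideanSpace.sphere_zero_eq _ zero_le_one, sigma1]
  congr 1
  ext r
  simp only [Set.mem_ofPred_eq, Set.mem_image, one_pow, EuclideanSpace.norm_eq, Real.norm_eq_abs,
    sq_abs]
  constructor
  · rintro ⟨x, hx, rfl⟩
    exact ⟨WithLp.toLp 2 x, hx, rfl⟩
  · rintro ⟨x, hx, rfl⟩
    exact ⟨x.ofLp, hx, rfl⟩

theorem stmt15_general {n : ℕ} (T₀ T : Matrix (Fin n) (Fin n) ℝ)
    (S : Finset (Fin n))
    (hT₀S : ∀ i ∈ S, ∑ j ∈ S, T₀ i j = 1) :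
    sigma1
        (dnf (T.submatrix (fun i : {x // x ∈ S} => (i : Fin n))
            (fun j : {x // x ∈ S} => (j : Fin n))) -
          T₀.submatrix (fun i : {x // x ∈ S} => (i : Fin n))
            (fun j : {x // x ∈ S} => (j : Fin n)))
      ≤ sigma1 (T - T₀) := by
  have hrow : ∀ i, ∑ j, T₀.submatrix (Subtype.val : S → Fin n) Subtype.val i j = 1 :=
    fun i => (Finset.sum_coe_sort S (T₀ i)).trans (hT₀S i i.2)
  rw [sigma1_eq_l2_opNorm, sigma1_eq_l2_opNorm, dnf_sub_eq_sub_mul_centering _ _ hrow]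
  calc _ ≤ ‖(T - T₀).submatrix Subtype.val Subtype.val‖ * ‖centering ℝ S‖ :=
        l2_opNorm_mul _ _
    _ ≤ ‖T - T₀‖ * 1 := by
        gcongr
        · exact l2_opNorm_submatrix_le _ Subtype.val_injective Subtype.val_injective
        · exact isStarProjection_centering.norm_le
    _ = ‖T - T₀‖ := mul_one _

/-- If `T₀, T` are stochastic, `S` a set of indices with `T₀[S]` stochastic, and
`T̃ = dnf(T[S])`, then `‖T̃ - T₀[S]‖₂ ≤ ‖T - T₀‖₂`. -/
theorem stmt15 {n : ℕ} (T₀ T : Matrix (Fin n) (Fin n) ℝ)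
    (hT₀pos : ∀ i j, 0 ≤ T₀ i j) (hT₀row : ∀ i, ∑ j, T₀ i j = 1)
    (hTpos : ∀ i j, 0 ≤ T i j) (hTrow : ∀ i, ∑ j, T i j = 1)
    (S : Finset (Fin n)) (hS : S.Nonempty)
    (hT₀S : ∀ i ∈ S, ∑ j ∈ S, T₀ i j = 1) :
    sigma1
        (dnf (T.submatrix (fun i : {x // x ∈ S} => (i : Fin n))
            (fun j : {x // x ∈ S} => (j : Fin n))) -
          T₀.submatrix (fun i : {x // x ∈ S} => (i : Fin n))
            (fun j : {x // x ∈ S} => (j : Fin n)))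
      ≤ sigma1 (T - T₀) :=
  stmt15_general T₀ T S hT₀S
end

section
/- Iterated dangling node fixes on nested principal submatrices agree with a single dangling node fix: let T be a stochastic matrix partitioned with diagonal blocks of sizes k, ℓ, m. Let S = dnf of the leading (k+ℓ)×(k+ℓ) principal submatrix of T, and then apply dnf to the leading k×k principal submatrix of S. The result equals dnf applied directly to the leading k×k principal submatrix of T, namely T₁₁ + (1/k)(T₁₂𝟏 + T₁₃𝟏)𝟏^⊤. -/
open Matrix BigOperators

/-!
A dangling node fix adds a constant `c` to every entry of a row. On a principal submatrix with
`p` columns this raises the row sum by `p c` and lowers the deficit by as much, so a second fix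
removes `c` again and then spreads the deficit of the plain restriction: `dnf` of a principal
submatrix of `dnf A` is `dnf` of that submatrix of `A`. For a stochastic `T` the deficit of a
leading row block is the mass of `T` outside its leading columns.
-/

theorem dnf_apply {ι : Type*} [Fintype ι] (A : Matrix ι ι ℝ) (i j : ι) :
    dnf A i j = A i j + (Fintype.card ι : ℝ)⁻¹ * (1 - ∑ j', A i j') := by
  simp [dnf, Matrix.mul_apply]

theorem dnf_submatrix_dnf {ι κ : Type*} [Fintype ι] [Fintype κ] (A : Matrix ι ι ℝ)
    (e : κ → ι) : dnf ((dnf A).submatrix e e) = dnf (A.submatrix e e) := by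
  rcases isEmpty_or_nonempty κ with hκ | hκ
  · exact Subsingleton.elim _ _
  have hcard : (Fintype.card κ : ℝ) ≠ 0 := Nat.cast_ne_zero.mpr Fintype.card_ne_zero
  ext i j
  simp only [dnf_apply, submatrix_apply, Finset.sum_add_distrib, Finset.sum_const,
    Finset.card_univ, nsmul_eq_mul]
  field_simp
  ring

theorem Fin.sum_castLE_add_sum_filter_le {M : Type*} [AddCommMonoid M] {k n : ℕ} (h : k ≤ n)
    (f : Fin n → M) :
    ∑ j : Fin k, f (Fin.castLE h j) + ∑ j ∈ Finset.univ.filter (fun j : Fin n => k ≤ (j : ℕ)),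
      f j = ∑ j, f j := by
  rw [← Finset.sum_filter_not_add_sum_filter Finset.univ (fun j : Fin n => k ≤ (j : ℕ))]
  congr 1
  refine Finset.sum_bij (fun j _ => Fin.castLE h j) (by simp) (by simp) ?_ (by simp)
  intro j hj
  exact ⟨⟨j, by simpa using hj⟩, Finset.mem_univ _, rfl⟩

theorem stmt17_general {k l m : ℕ}
    (T : Matrix (Fin (k + l + m)) (Fin (k + l + m)) ℝ)
    (hTrow : ∀ i, ∑ j, T i j = 1) :
    dnf ((dnf (T.submatrix (Fin.castLE (Nat.le_add_right (k + l) m))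
            (Fin.castLE (Nat.le_add_right (k + l) m)))).submatrix
          (Fin.castLE (Nat.le_add_right k l)) (Fin.castLE (Nat.le_add_right k l))) =
        dnf (T.submatrix (Fin.castLE ((Nat.le_add_right k l).trans (Nat.le_add_right (k + l) m)))
          (Fin.castLE ((Nat.le_add_right k l).trans (Nat.le_add_right (k + l) m)))) ∧
      dnf (T.submatrix (Fin.castLE ((Nat.le_add_right k l).trans (Nat.le_add_right (k + l) m)))
          (Fin.castLE ((Nat.le_add_right k l).trans (Nat.le_add_right (k + l) m)))) =
        Matrix.of (fun i _j : Fin k =>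
          T (Fin.castLE ((Nat.le_add_right k l).trans (Nat.le_add_right (k + l) m)) i)
              (Fin.castLE ((Nat.le_add_right k l).trans (Nat.le_add_right (k + l) m)) _j) +
            (k : ℝ)⁻¹ *
              ∑ j' ∈ Finset.univ.filter (fun j' : Fin (k + l + m) => k ≤ (j' : ℕ)),
                T (Fin.castLE ((Nat.le_add_right k l).trans (Nat.le_add_right (k + l) m)) i)
                  j') := by
  refine ⟨?_, ?_⟩
  · rw [dnf_submatrix_dnf, submatrix_submatrix, Fin.castLE_comp_castLE]
  · ext i j
    have hdeficit := Fin.sum_castLE_add_sum_filter_le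
      ((Nat.le_add_right k l).trans (Nat.le_add_right (k + l) m))
      (T (Fin.castLE ((Nat.le_add_right k l).trans (Nat.le_add_right (k + l) m)) i))
    rw [hTrow] at hdeficit
    rw [dnf_apply, of_apply, Fintype.card_fin, submatrix_apply, ← hdeficit]
    simp only [submatrix_apply, add_sub_cancel_left]

/-- Iterated dangling node fixes on nested leading principal submatrices agree with a
single dangling node fix: for a stochastic `T` with diagonal blocks of sizes `k, ℓ, m`,
applying `dnf` to the leading `(k+ℓ)×(k+ℓ)` submatrix and then `dnf` to the leading
`k×k` submatrix of the result equals `dnf` of the leading `k×k` submatrix of `T`,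
namely `T₁₁ + (1/k)(T₁₂𝟏 + T₁₃𝟏)𝟏ᵀ`. -/
theorem stmt17 {k l m : ℕ} (hk : 0 < k)
    (T : Matrix (Fin (k + l + m)) (Fin (k + l + m)) ℝ)
    (hTpos : ∀ i j, 0 ≤ T i j) (hTrow : ∀ i, ∑ j, T i j = 1) :
    dnf ((dnf (T.submatrix (Fin.castLE (Nat.le_add_right (k + l) m))
            (Fin.castLE (Nat.le_add_right (k + l) m)))).submatrix
          (Fin.castLE (Nat.le_add_right k l)) (Fin.castLE (Nat.le_add_right k l))) =
        dnf (T.submatrix (Fin.castLE ((Nat.le_add_right k l).trans (Nat.le_add_right (k + l) m)))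
          (Fin.castLE ((Nat.le_add_right k l).trans (Nat.le_add_right (k + l) m)))) ∧
      dnf (T.submatrix (Fin.castLE ((Nat.le_add_right k l).trans (Nat.le_add_right (k + l) m)))
          (Fin.castLE ((Nat.le_add_right k l).trans (Nat.le_add_right (k + l) m)))) =
        Matrix.of (fun i _j : Fin k =>
          T (Fin.castLE ((Nat.le_add_right k l).trans (Nat.le_add_right (k + l) m)) i)
              (Fin.castLE ((Nat.le_add_right k l).trans (Nat.le_add_right (k + l) m)) _j) +
            (k : ℝ)⁻¹ *
              ∑ j' ∈ Finset.univ.filter (fun j' : Fin (k + l + m) => k ≤ (j' : ℕ)),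
                T (Fin.castLE ((Nat.le_add_right k l).trans (Nat.le_add_right (k + l) m)) i)
                  j') :=
  stmt17_general T hTrow
end

section
/- Let T be a stochastic matrix partitioned in 2×2 block form with diagonal blocks of sizes k and n−k, and let z = (1/√(nk(n−k)))·[(n−k)𝟏_k; −k𝟏_{n−k}]. Then ‖z‖₂ = 1, z^⊤𝟏 = 0, and ‖(I−T)z‖₂² = (n/(k(n−k)))·(‖T₁₂𝟏‖₂² + ‖T₂₁𝟏‖₂²); consequently, the second smallest singular value σ of I−T satisfies σ² ≤ (n/(k(n−k)))·(‖T₁₂𝟏‖₂² + ‖T₂₁𝟏‖₂²). -/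
open Matrix BigOperators

/-!
Since `z` is constant on the two blocks and every row of `T` sums to `1`, the `i`-th entry of
`(I - T) z` is `n / √(nk(n-k))` times the row sum of `T₁₂` or `T₂₁` through `i`, up to sign;
the three identities are direct computations.

For the singular value bound, `I - T` kills `𝟏` and `z` is a unit vector orthogonal to `𝟏`, so
`‖(I - T) w‖ ≤ ‖(I - T) z‖ ‖w‖` on the plane spanned by `𝟏` and `z`. The span of the eigenvectors
of `(I - T)ᴴ (I - T)` with eigenvalue above `‖(I - T) z‖²` meets that plane trivially, so at
least two eigenvalues are at most `‖(I - T) z‖²`; the same holds for `(I - T) (I - T)ᴴ`, which has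
the same characteristic polynomial.
-/

open Module RCLike Finset
open scoped InnerProductSpace

namespace LinearMap.IsSymmetric

variable {𝕜 E : Type*} [RCLike 𝕜] [NormedAddCommGroup E] [InnerProductSpace 𝕜 E]
  [FiniteDimensional 𝕜 E] {T : E →ₗ[𝕜] E} {n : ℕ}

theorem re_inner_apply_self_eq_sum (hT : T.IsSymmetric) (hn : finrank 𝕜 E = n) (w : E) :
    re ⟪T w, w⟫_𝕜 = ∑ i, hT.eigenvalues hn i * ‖⟪hT.eigenvectorBasis hn i, w⟫_𝕜‖ ^ 2 := by
  set b := hT.eigenvectorBasis hn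
  rw [← b.sum_inner_mul_inner, map_sum]
  refine Finset.sum_congr rfl fun i _ => ?_
  rw [hT, hT.apply_eigenvectorBasis, inner_smul_right, mul_assoc, ← inner_conj_symm w,
    RCLike.conj_mul, ← RCLike.ofReal_pow, ← RCLike.ofReal_mul, RCLike.ofReal_re]

theorem finrank_le_card_eigenvalues_le (hT : T.IsSymmetric) (hn : finrank 𝕜 E = n)
    {V : Submodule 𝕜 E} {c : ℝ} (hV : ∀ w ∈ V, re ⟪T w, w⟫_𝕜 ≤ c * ‖w‖ ^ 2) :
    finrank 𝕜 V ≤ Fintype.card {i // hT.eigenvalues hn i ≤ c} := by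
  set b := hT.eigenvectorBasis hn
  -- On `V` the form `⟪T w, w⟫ - c ‖w‖²` is `≤ 0`, while it is `> 0` on nonzero combinations of
  -- eigenvectors with eigenvalue `> c`; so the remaining coordinates are injective on `V`.
  let φ : V →ₗ[𝕜] {i // hT.eigenvalues hn i ≤ c} → 𝕜 :=
    LinearMap.pi fun i => innerₛₗ 𝕜 (b i) ∘ₗ V.subtype
  suffices Function.Injective φ by
    simpa using LinearMap.finrank_le_finrank_of_injective this
  rw [← LinearMap.ker_eq_bot, Submodule.eq_bot_iff]
  rintro ⟨w, hw⟩ hφw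
  have hS : ∀ i, hT.eigenvalues hn i ≤ c → ⟪b i, w⟫_𝕜 = 0 := fun i hi =>
    congr_fun hφw ⟨i, hi⟩
  have hsum : ∑ i, (hT.eigenvalues hn i - c) * ‖⟪b i, w⟫_𝕜‖ ^ 2 ≤ 0 := by
    rw [Finset.sum_congr rfl fun i _ => sub_mul _ _ _, Finset.sum_sub_distrib, ← Finset.mul_sum,
      b.sum_sq_norm_inner_right, ← hT.re_inner_apply_self_eq_sum hn w]
    linarith [hV w hw]
  have hterm : ∀ i, 0 ≤ (hT.eigenvalues hn i - c) * ‖⟪b i, w⟫_𝕜‖ ^ 2 := fun i => by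
    by_cases hi : hT.eigenvalues hn i ≤ c
    · simp [hS i hi]
    · exact mul_nonneg (by linarith) (sq_nonneg _)
  have hzero := (Finset.sum_eq_zero_iff_of_nonneg fun i _ => hterm i).mp
    (le_antisymm hsum (Finset.sum_nonneg fun i _ => hterm i))
  have hcoord : ∀ i, ⟪b i, w⟫_𝕜 = 0 := fun i => by
    by_cases hi : hT.eigenvalues hn i ≤ c
    · exact hS i hi
    · simpa [sub_eq_zero, ne_of_gt (not_le.mp hi)] using hzero i (Finset.mem_univ i)
  simpa [hcoord] using (b.sum_repr' w).symm

end LinearMap.IsSymmetric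

section TwoSmallEigenvalues

variable {𝕜 E F : Type*} [RCLike 𝕜] [NormedAddCommGroup E] [InnerProductSpace 𝕜 E]
  [NormedAddCommGroup F] [InnerProductSpace 𝕜 F]

theorem LinearMap.norm_apply_le_of_mem_span_pair (A : E →ₗ[𝕜] F) {u z w : E} (hAu : A u = 0)
    (huz : ⟪u, z⟫_𝕜 = 0) (hz : ‖z‖ = 1) (hw : w ∈ Submodule.span 𝕜 {u, z}) :
    ‖A w‖ ≤ ‖A z‖ * ‖w‖ := by
  obtain ⟨a, b, rfl⟩ := Submodule.mem_span_pair.mp hw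
  have horth : ⟪a • u, b • z⟫_𝕜 = 0 := by simp [inner_smul_left, inner_smul_right, huz]
  have hbw : ‖b‖ ≤ ‖a • u + b • z‖ := by
    refine (mul_self_le_mul_self_iff (norm_nonneg _) (norm_nonneg _)).mpr ?_
    rw [norm_add_sq_eq_norm_sq_add_norm_sq_of_inner_eq_zero _ _ horth, norm_smul b, hz, mul_one]
    exact le_add_of_nonneg_left (mul_self_nonneg _)
  rw [map_add, map_smul, map_smul, hAu, smul_zero, zero_add, norm_smul, mul_comm]
  exact mul_le_mul_of_nonneg_left hbw (norm_nonneg _)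

variable {m : Type*} [Fintype m] [DecidableEq m]

theorem Matrix.IsHermitian.finrank_le_card_eigenvalues_le {B : Matrix m m 𝕜} (hB : B.IsHermitian)
    {V : Submodule 𝕜 (EuclideanSpace 𝕜 m)} {c : ℝ}
    (hV : ∀ w ∈ V, re ⟪toEuclideanLin B w, w⟫_𝕜 ≤ c * ‖w‖ ^ 2) :
    finrank 𝕜 V ≤ Fintype.card {i // hB.eigenvalues i ≤ c} :=
  ((isSymmetric_toEuclideanLin_iff.mpr hB).finrank_le_card_eigenvalues_le
    finrank_euclideanSpace hV).trans_eq
    (Fintype.card_congr ((Fintype.equivOfCardEq (Fintype.card_fin _)).subtypeEquiv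
      fun _ => by simp [IsHermitian.eigenvalues, IsHermitian.eigenvalues₀]))

theorem Matrix.eigenvalues_mul_conjTranspose_self_eq_conjTranspose_mul_self (A : Matrix m m 𝕜) :
    (isHermitian_mul_conjTranspose_self A).eigenvalues =
      (isHermitian_conjTranspose_mul_self A).eigenvalues :=
  (IsHermitian.eigenvalues_eq_eigenvalues_iff _ _).mpr (charpoly_mul_comm _ _)

theorem Matrix.two_le_card_eigenvalues_mul_conjTranspose_self_le (A : Matrix m m 𝕜)
    {u z : EuclideanSpace 𝕜 m} (hu : u ≠ 0) (hAu : toEuclideanLin A u = 0)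
    (huz : ⟪u, z⟫_𝕜 = 0) (hz : ‖z‖ = 1) :
    2 ≤ Fintype.card
      {i // (isHermitian_mul_conjTranspose_self A).eigenvalues i ≤ ‖toEuclideanLin A z‖ ^ 2} := by
  have hli : LinearIndependent 𝕜 ![u, z] := by
    refine linearIndependent_of_ne_zero_of_inner_eq_zero ?_ ?_
    · intro i; fin_cases i
      · exact hu
      · exact norm_ne_zero_iff.mp (by simp [hz])
    · intro i j hij; fin_cases i <;> fin_cases j <;> simp_all [inner_eq_zero_symm]
  have hV : finrank 𝕜 (Submodule.span 𝕜 {u, z}) = 2 := by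
    rw [← Matrix.range_cons_cons_empty u z ![], finrank_span_eq_card hli, Fintype.card_fin]
  rw [eigenvalues_mul_conjTranspose_self_eq_conjTranspose_mul_self]
  refine hV.symm.le.trans
    ((isHermitian_conjTranspose_mul_self A).finrank_le_card_eigenvalues_le fun w hw => ?_)
  have hAw := (toEuclideanLin A).norm_apply_le_of_mem_span_pair hAu huz hz hw
  have hAAw : toEuclideanLin (Aᴴ * A) w = (toEuclideanLin A).adjoint (toEuclideanLin A w) := by
    rw [← toEuclideanLin_conjTranspose_eq_adjoint]; simp
  rw [hAAw, LinearMap.adjoint_inner_left, inner_self_eq_norm_sq, ← mul_pow]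
  exact pow_le_pow_left₀ (norm_nonneg _) hAw 2

end TwoSmallEigenvalues

theorem List.getD_one_mergeSort_le {α : Type*} [LinearOrder α] {l : List α} {b : α} (d : α)
    (h : 2 ≤ l.countP fun x => decide (x ≤ b)) :
    (l.mergeSort fun x y => decide (x ≤ y)).getD 1 d ≤ b := by
  have hsorted := List.pairwise_mergeSort' (· ≤ ·) l
  rw [← (List.mergeSort_perm l _).countP_eq] at h
  generalize l.mergeSort _ = M at hsorted h
  match M, hsorted, h with
  | [], _, h | [_], _, h => exact absurd (h.trans (List.countP_le_length)) (by simp)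
  | x :: y :: rest, hsorted, h =>
    by_contra! hby
    have hrest : ∀ a ∈ y :: rest, b < a := by
      simp only [List.mem_cons, forall_eq_or_imp]
      exact ⟨hby, fun a ha => hby.trans_le (List.rel_of_pairwise_cons hsorted.of_cons ha)⟩
    have : (y :: rest).countP (fun x => decide (x ≤ b)) = 0 :=
      List.countP_eq_zero.mpr fun a ha => by simpa using hrest a ha
    rw [List.countP_cons, this] at h
    split at h <;> omega

theorem List.countP_ofFn {α : Type*} {n : ℕ} (f : Fin n → α) (p : α → Prop) [DecidablePred p] :
    (List.ofFn f).countP (fun x => decide (p x)) = Fintype.card {i // p (f i)} := by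
  rw [Fintype.card_subtype, ← Multiset.coe_countP, ← Fin.univ_val_map, Multiset.countP_map]
  rfl

section SecondSmallestSV

variable {n : ℕ} (A : Matrix (Fin n) (Fin n) ℝ)

theorem secondSmallestSV_nonneg : 0 ≤ secondSmallestSV A := by
  unfold secondSmallestSV
  set M := List.mergeSort _ _
  by_cases h : 1 < M.length
  · rw [List.getD_eq_getElem _ _ h]
    obtain ⟨i, hi⟩ := List.mem_ofFn.mp (List.mem_mergeSort.mp (List.getElem_mem h))
    exact hi ▸ Real.sqrt_nonneg _
  · rw [List.getD_eq_default _ _ (not_lt.mp h)]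

theorem secondSmallestSV_le_sqrt {c : ℝ}
    (h : 2 ≤ Fintype.card {i // (isHermitian_mul_conjTranspose_self A).eigenvalues i ≤ c}) :
    secondSmallestSV A ≤ √c := by
  refine List.getD_one_mergeSort_le _ (h.trans ?_)
  rw [List.countP_ofFn (p := (· ≤ √c))]
  exact Fintype.card_subtype_mono _ _ fun i hi => Real.sqrt_le_sqrt hi

theorem sq_secondSmallestSV_le {u z : Fin n → ℝ} (hu : u ≠ 0) (hAu : A *ᵥ u = 0)
    (huz : u ⬝ᵥ z = 0) (hz : z ⬝ᵥ z = 1) :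
    secondSmallestSV A ^ 2 ≤ (A *ᵥ z) ⬝ᵥ (A *ᵥ z) := by
  have hnorm : ∀ v : Fin n → ℝ, ‖WithLp.toLp 2 v‖ ^ 2 = v ⬝ᵥ v := fun v => by
    rw [EuclideanSpace.real_norm_sq_eq]; simp [dotProduct, sq]
  have hcard := A.two_le_card_eigenvalues_mul_conjTranspose_self_le (u := WithLp.toLp 2 u)
    (z := WithLp.toLp 2 z) (by simpa using hu) (by simpa using hAu)
    (by rw [EuclideanSpace.inner_toLp_toLp, star_trivial, dotProduct_comm, huz])
    (by rw [← sq_eq_sq₀ (norm_nonneg _) zero_le_one, hnorm, hz, one_pow])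
  calc secondSmallestSV A ^ 2 ≤ ‖toEuclideanLin A (WithLp.toLp 2 z)‖ ^ 2 :=
        pow_le_pow_left₀ (secondSmallestSV_nonneg A)
          (by simpa using secondSmallestSV_le_sqrt A hcard) 2
    _ = (A *ᵥ z) ⬝ᵥ (A *ᵥ z) := hnorm _

end SecondSmallestSV

section BlockVector

variable {R : Type*} [CommRing R] {n : ℕ} (k : ℕ)

theorem Fin.sum_eq_sum_filter_val_lt_add {M : Type*} [AddCommMonoid M] (f : Fin n → M) :
    ∑ i, f i = ∑ i ∈ univ.filter (fun i : Fin n => (i : ℕ) < k), f i +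
      ∑ i ∈ univ.filter (fun i : Fin n => k ≤ (i : ℕ)), f i := by
  simp only [← not_lt, sum_filter_add_sum_filter_not]

theorem Fin.card_filter_le_val (hk : k ≤ n) : #{i : Fin n | k ≤ (i : ℕ)} = n - k := by
  have hsplit := Fin.sum_eq_sum_filter_val_lt_add k fun _ : Fin n => 1
  simp only [Finset.sum_const, smul_eq_mul, mul_one, card_univ, Fintype.card_fin,
    Fin.card_filter_val_lt, min_eq_right hk] at hsplit
  omega

theorem Fin.sum_ite_val_lt (hk : k ≤ n) (a b : R) :
    ∑ i : Fin n, (if (i : ℕ) < k then a else b) = k * a + ((n : R) - k) * b := by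
  rw [Fin.sum_eq_sum_filter_val_lt_add k,
    sum_congr rfl fun i hi => if_pos (mem_filter.mp hi).2,
    sum_congr rfl fun i hi => if_neg (not_lt.mpr (mem_filter.mp hi).2), Finset.sum_const,
    Finset.sum_const, Fin.card_filter_val_lt, Fin.card_filter_le_val k hk, min_eq_right hk,
    nsmul_eq_mul, nsmul_eq_mul, Nat.cast_sub hk]

theorem Matrix.one_sub_mulVec_ite_val_lt {T : Matrix (Fin n) (Fin n) R}
    (hT : ∀ i, ∑ j, T i j = 1) (a b : R) (i : Fin n) :
    ((1 - T) *ᵥ fun j : Fin n => if (j : ℕ) < k then a else b) i =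
      if (i : ℕ) < k then (a - b) * ∑ j ∈ univ.filter (fun j : Fin n => k ≤ (j : ℕ)), T i j
      else (b - a) * ∑ j ∈ univ.filter (fun j : Fin n => (j : ℕ) < k), T i j := by
  have hrow := hT i
  rw [Fin.sum_eq_sum_filter_val_lt_add k] at hrow
  have hTz : (T *ᵥ fun j : Fin n => if (j : ℕ) < k then a else b) i =
      (∑ j ∈ univ.filter (fun j : Fin n => (j : ℕ) < k), T i j) * a +
        (∑ j ∈ univ.filter (fun j : Fin n => k ≤ (j : ℕ)), T i j) * b := by
    rw [mulVec, dotProduct, Fin.sum_eq_sum_filter_val_lt_add k, sum_mul, sum_mul]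
    congr 1 <;> refine sum_congr rfl fun j hj => ?_
    · rw [if_pos (mem_filter.mp hj).2]
    · rw [if_neg (not_lt.mpr (mem_filter.mp hj).2)]
  rw [sub_mulVec, one_mulVec, Pi.sub_apply, hTz]
  split_ifs
  · linear_combination (-a) * hrow
  · linear_combination (-b) * hrow

theorem Matrix.sum_sq_one_sub_mulVec_ite_val_lt {T : Matrix (Fin n) (Fin n) R}
    (hT : ∀ i, ∑ j, T i j = 1) (a b : R) :
    ∑ i, ((1 - T) *ᵥ fun j : Fin n => if (j : ℕ) < k then a else b) i ^ 2 =
      (a - b) ^ 2 *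
        ((∑ i ∈ univ.filter (fun i : Fin n => (i : ℕ) < k),
            (∑ j ∈ univ.filter (fun j : Fin n => k ≤ (j : ℕ)), T i j) ^ 2) +
          ∑ i ∈ univ.filter (fun i : Fin n => k ≤ (i : ℕ)),
            (∑ j ∈ univ.filter (fun j : Fin n => (j : ℕ) < k), T i j) ^ 2) := by
  simp only [one_sub_mulVec_ite_val_lt k hT, ite_pow, sum_ite, not_lt, mul_pow, ← mul_sum, mul_add]
  ring

end BlockVector

theorem stmt19_general {n k : ℕ} (hk : 0 < k) (hkn : k < n)
    (T : Matrix (Fin n) (Fin n) ℝ)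
    (hTrow : ∀ i, ∑ j, T i j = 1)
    (z : Fin n → ℝ)
    (hz : z = fun i : Fin n =>
      if (i : ℕ) < k then ((n : ℝ) - k) / Real.sqrt (n * k * ((n : ℝ) - k))
      else -(k : ℝ) / Real.sqrt (n * k * ((n : ℝ) - k))) :
    ∑ i, z i ^ 2 = 1 ∧
    ∑ i, z i = 0 ∧
    ∑ i, (Matrix.mulVec (1 - T) z i) ^ 2 =
      (n : ℝ) / (k * ((n : ℝ) - k)) *
        ((∑ i ∈ Finset.univ.filter (fun i : Fin n => (i : ℕ) < k),
            (∑ j ∈ Finset.univ.filter (fun j : Fin n => k ≤ (j : ℕ)), T i j) ^ 2) +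
          ∑ i ∈ Finset.univ.filter (fun i : Fin n => k ≤ (i : ℕ)),
            (∑ j ∈ Finset.univ.filter (fun j : Fin n => (j : ℕ) < k), T i j) ^ 2) ∧
    secondSmallestSV (1 - T) ^ 2 ≤
      (n : ℝ) / (k * ((n : ℝ) - k)) *
        ((∑ i ∈ Finset.univ.filter (fun i : Fin n => (i : ℕ) < k),
            (∑ j ∈ Finset.univ.filter (fun j : Fin n => k ≤ (j : ℕ)), T i j) ^ 2) +
          ∑ i ∈ Finset.univ.filter (fun i : Fin n => k ≤ (i : ℕ)),
            (∑ j ∈ Finset.univ.filter (fun j : Fin n => (j : ℕ) < k), T i j) ^ 2) := by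
  have hkR : (0 : ℝ) < k := by exact_mod_cast hk
  have hnkR : (0 : ℝ) < n - k := sub_pos.mpr (by exact_mod_cast hkn)
  have hnR : (0 : ℝ) < n := by linarith
  have hprod : 0 < (n : ℝ) * k * (n - k) := mul_pos (mul_pos hnR hkR) hnkR
  have hs : √(n * k * ((n : ℝ) - k)) ^ 2 = n * k * (n - k) := Real.sq_sqrt hprod.le
  have hnorm : ∑ i, z i ^ 2 = 1 := by
    simp only [hz, ite_pow]
    rw [Fin.sum_ite_val_lt k hkn.le, div_pow, div_pow, hs]
    field_simp
    ring
  have hsum : ∑ i, z i = 0 := by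
    rw [hz, Fin.sum_ite_val_lt k hkn.le]
    ring
  have hresidual := Matrix.sum_sq_one_sub_mulVec_ite_val_lt k hTrow
    (((n : ℝ) - k) / √(n * k * ((n : ℝ) - k))) (-(k : ℝ) / √(n * k * ((n : ℝ) - k)))
  rw [← hz, div_sub_div_same, sub_neg_eq_add, sub_add_cancel, div_pow, hs,
    show (n : ℝ) ^ 2 / (n * k * (n - k)) = n / (k * (n - k)) by field_simp] at hresidual
  refine ⟨hnorm, hsum, hresidual, ?_⟩
  rw [← hresidual]
  refine (sq_secondSmallestSV_le (1 - T) (u := 1) (z := z) ?_ ?_ ?_ ?_).trans_eq ?_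
  · exact Function.ne_iff.mpr ⟨⟨0, hk.trans hkn⟩, one_ne_zero⟩
  · rw [sub_mulVec, one_mulVec, sub_eq_zero]
    ext i
    simp [mulVec, dotProduct, hTrow]
  · rw [one_dotProduct, hsum]
  · simpa [dotProduct, sq] using hnorm
  · simp [dotProduct, sq]

/-- For a stochastic matrix `T` in 2×2 block form with diagonal blocks of sizes `k` and
`n - k`, and `z = (1/√(nk(n-k))) [(n-k)𝟏; -k𝟏]`: `‖z‖₂ = 1`, `zᵀ𝟏 = 0`,
`‖(I-T)z‖₂² = (n/(k(n-k)))(‖T₁₂𝟏‖₂² + ‖T₂₁𝟏‖₂²)`, and hence the second smallest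
singular value `σ` of `I - T` satisfies `σ² ≤ (n/(k(n-k)))(‖T₁₂𝟏‖₂² + ‖T₂₁𝟏‖₂²)`. -/
theorem stmt19 {n k : ℕ} (hk : 0 < k) (hkn : k < n)
    (T : Matrix (Fin n) (Fin n) ℝ)
    (hTpos : ∀ i j, 0 ≤ T i j) (hTrow : ∀ i, ∑ j, T i j = 1)
    (z : Fin n → ℝ)
    (hz : z = fun i : Fin n =>
      if (i : ℕ) < k then ((n : ℝ) - k) / Real.sqrt (n * k * ((n : ℝ) - k))
      else -(k : ℝ) / Real.sqrt (n * k * ((n : ℝ) - k))) :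
    ∑ i, z i ^ 2 = 1 ∧
    ∑ i, z i = 0 ∧
    ∑ i, (Matrix.mulVec (1 - T) z i) ^ 2 =
      (n : ℝ) / (k * ((n : ℝ) - k)) *
        ((∑ i ∈ Finset.univ.filter (fun i : Fin n => (i : ℕ) < k),
            (∑ j ∈ Finset.univ.filter (fun j : Fin n => k ≤ (j : ℕ)), T i j) ^ 2) +
          ∑ i ∈ Finset.univ.filter (fun i : Fin n => k ≤ (i : ℕ)),
            (∑ j ∈ Finset.univ.filter (fun j : Fin n => (j : ℕ) < k), T i j) ^ 2) ∧
    secondSmallestSV (1 - T) ^ 2 ≤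
      (n : ℝ) / (k * ((n : ℝ) - k)) *
        ((∑ i ∈ Finset.univ.filter (fun i : Fin n => (i : ℕ) < k),
            (∑ j ∈ Finset.univ.filter (fun j : Fin n => k ≤ (j : ℕ)), T i j) ^ 2) +
          ∑ i ∈ Finset.univ.filter (fun i : Fin n => k ≤ (i : ℕ)),
            (∑ j ∈ Finset.univ.filter (fun j : Fin n => (j : ℕ) < k), T i j) ^ 2) :=
  stmt19_general hk hkn T hTrow z hz
end
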